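/- arXiv:0810.3702 — 8 statements merged into one kernel-verified Lean document; each statement's English description precedes it below -/
import Mathlib

section
/- Fix real numbers α₁ < α₂ < α₃ and positive reals ρ₁, ρ₂, ρ₃, and suppose that for every positive integer k the set V_k of Van Vleck zeros of order k has exactly k+1 elements. Then there exist real constants C₁ and M > 0 (depending only on the α_j and ρ_j) such that for all sufficiently large k, | Σ_{ν ∈ V_k} ν − ((α₁+α₂+α₃)/3)·k − C₁ | ≤ M/k; in other words, the sum of the Van Vleck zeros of order k equals ((α₁+α₂+α₃)/3)·k + C₁ + O(1/k) as k → ∞. -/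
open Polynomial

set_option maxHeartbeats 1000000 in
/-- Asymptotics of the sum of the Van Vleck zeros of order `k`. -/
theorem vanVleck_zero_sum_asymptotics
    (α₁ α₂ α₃ ρ₁ ρ₂ ρ₃ : ℝ)
    (h12 : α₁ < α₂) (h23 : α₂ < α₃)
    (hρ₁ : 0 < ρ₁) (hρ₂ : 0 < ρ₂) (hρ₃ : 0 < ρ₃)
    (A B : ℝ[X])
    (hA : A = (X - C α₁) * (X - C α₂) * (X - C α₃))
    (hB : B = C (2 * ρ₁) * ((X - C α₂) * (X - C α₃))
            + C (2 * ρ₂) * ((X - C α₁) * (X - C α₃))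
            + C (2 * ρ₃) * ((X - C α₁) * (X - C α₂)))
    (μ : ℕ → ℝ)
    (hμ : ∀ j : ℕ, μ j = (j : ℝ) * ((j : ℝ) - 1 + 2 * (ρ₁ + ρ₂ + ρ₃)))
    (V : ℕ → Finset ℝ)
    (hV : ∀ k : ℕ, 1 ≤ k → ∀ v : ℝ, v ∈ V k ↔
      ∃ φ : ℝ[X], φ.degree = (k : ℕ) ∧
        A * derivative (derivative φ) + B * derivative φ
          = C (μ k) * (X - C v) * φ)
    (hcard : ∀ k : ℕ, 1 ≤ k → (V k).card = k + 1) :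
    ∃ (C₁ M : ℝ), 0 < M ∧ ∃ N : ℕ, ∀ k : ℕ, N ≤ k →
      |(∑ v ∈ V k, v) - (α₁ + α₂ + α₃) / 3 * (k : ℝ) - C₁| ≤ M / (k : ℝ) := by
  classical
  set σ : ℝ := ρ₁ + ρ₂ + ρ₃ with hσdef
  have hσ : 0 < σ := by positivity
  set s : ℝ := α₁ + α₂ + α₃ with hsdef
  set a2 : ℝ := -s with ha2def
  set a1 : ℝ := α₁*α₂ + α₁*α₃ + α₂*α₃ with ha1def
  set a0 : ℝ := -(α₁*α₂*α₃) with ha0def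
  set b2 : ℝ := 2*σ with hb2def
  set b1 : ℝ := -(2*ρ₁*(α₂+α₃) + 2*ρ₂*(α₁+α₃) + 2*ρ₃*(α₁+α₂)) with hb1def
  set b0 : ℝ := 2*ρ₁*α₂*α₃ + 2*ρ₂*α₁*α₃ + 2*ρ₃*α₁*α₂ with hb0def
  have hA' : A = X^3 + X^2 * C a2 + X^1 * C a1 + C a0 := by
    rw [hA, ha2def, ha1def, ha0def, hsdef]
    simp only [map_add, map_mul, map_neg]
    ring
  have hB' : B = X^2 * C b2 + X^1 * C b1 + C b0 := by
    rw [hB, hb2def, hb1def, hb0def, hσdef]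
    simp only [map_add, map_mul, map_neg, map_ofNat]
    ring
  set c : ℝ := 2*σ - 1 with hcdef
  set C₁ : ℝ := (a2*c)/3 - b1/2 with hC₁def
  set D : ℝ := (a2/3)*(c^2-1) + (b1/2)*(1-c) with hDdef
  refine ⟨C₁, 2*|D| + 1, by positivity, 2, ?_⟩
  intro k hk
  -- the key trace identity
  have key : μ k * (∑ v ∈ V k, v)
      = -(a2 * (((k:ℝ)+1)*(k:ℝ)*((k:ℝ)-1))/3 + b1 * (((k:ℝ)+1)*(k:ℝ))/2) := by
    set n := k + 1 with hn
    have hk1 : 1 ≤ k := by omega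
    -- the linear operator
    set L : ℝ[X] →ₗ[ℝ] ℝ[X] :=
      { toFun := fun φ => A * derivative (derivative φ) + B * derivative φ - C (μ k) * (X * φ)
        map_add' := by intro φ ψ; simp only [derivative_add, mul_add]; ring
        map_smul' := by
          intro r φ
          simp only [derivative_smul]
          simp only [smul_eq_C_mul, RingHom.id_apply]
          ring } with hLset
    have hLdef : ∀ φ : ℝ[X], L φ
        = derivative (derivative φ) * X^3 + derivative (derivative φ) * X^2 * C a2
          + derivative (derivative φ) * X^1 * C a1 + derivative (derivative φ) * C a0
          + derivative φ * X^2 * C b2 + derivative φ * X^1 * C b1 + derivative φ * C b0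
          - φ * X^1 * C (μ k) := by
      intro φ
      show A * derivative (derivative φ) + B * derivative φ - C (μ k) * (X * φ) = _
      rw [hA', hB']; ring
    have hmem : ∀ φ ∈ degreeLT ℝ n, L φ ∈ degreeLT ℝ n := by
      intro φ hφ
      have hco : ∀ t : ℕ, n ≤ t → φ.coeff t = 0 :=
        (degree_lt_iff_coeff_zero φ n).mp (mem_degreeLT.mp hφ)
      rw [mem_degreeLT, degree_lt_iff_coeff_zero]
      intro m hm
      rw [hLdef]
      simp only [coeff_sub, coeff_add, coeff_mul_C, coeff_mul_X_pow', coeff_derivative]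
      have h3 : 3 ≤ m := by omega
      have h2' : 2 ≤ m := by omega
      have h1 : 1 ≤ m := by omega
      rw [if_pos h3, if_pos h2', if_pos h1, if_pos h2', if_pos h1, if_pos h1]
      rcases eq_or_lt_of_le hm with hm' | hm'
      · -- m = k + 1 : cancellation
        have hm2 : m = k + 1 := by omega
        subst hm2
        have e1 : k + 1 - 3 = k - 2 := by omega
        have e2 : k + 1 - 2 = k - 1 := by omega
        have e3 : k + 1 - 1 = k := by omega
        rw [e1, e2, e3]
        have e4 : k - 2 + 1 = k - 1 := by omega
        have e5 : k - 1 + 1 = k := by omega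
        rw [e4, e5]
        rw [hco (k+1) (by omega), hco (k+1+1) (by omega), hco (k+1+1+1) (by omega)]
        have c1 : ((k - 1 : ℕ) : ℝ) = (k : ℝ) - 1 := by
          rw [Nat.cast_sub (by omega)]; norm_num
        have c2 : ((k - 2 : ℕ) : ℝ) = (k : ℝ) - 2 := by
          rw [Nat.cast_sub (by omega)]; norm_num
        rw [c1, c2, hμ, hb2def, hσdef]
        ring
      · -- m ≥ k + 2 : all coefficients vanish
        rw [hco (m - 3 + 1 + 1) (by omega), hco (m - 2 + 1 + 1) (by omega),
          hco (m - 1 + 1 + 1) (by omega), hco (m + 1 + 1) (by omega),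
          hco (m - 2 + 1) (by omega), hco (m - 1 + 1) (by omega),
          hco (m + 1) (by omega), hco (m - 1) (by omega)]
        ring
    set L' := L.restrict hmem with hL'set
    set e := Polynomial.degreeLTEquiv ℝ n with heset
    set bs : Module.Basis (Fin n) ℝ (Polynomial.degreeLT ℝ n) := (Pi.basisFun ℝ (Fin n)).map e.symm
      with hbsset
    haveI : Module.Finite ℝ (Polynomial.degreeLT ℝ n) := Module.Finite.of_basis bs
    haveI : Module.Free ℝ (Polynomial.degreeLT ℝ n) := Module.Free.of_basis bs
    -- every Van Vleck zero gives a root of the characteristic polynomial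
    have hroot : ∀ v ∈ V k, (X - Polynomial.C (-(μ k * v))) ∣ L'.charpoly := by
      intro v hv
      obtain ⟨φ, hdeg, heq⟩ := (hV k hk1 v).mp hv
      have hφmem : φ ∈ degreeLT ℝ n := by
        rw [mem_degreeLT, hdeg]; exact_mod_cast Nat.lt_succ_self k
      have hφne : φ ≠ 0 := by
        intro h; rw [h, degree_zero] at hdeg; exact absurd hdeg (by simp)
      have hLφ : L φ = (-(μ k * v)) • φ := by
        show A * derivative (derivative φ) + B * derivative φ - C (μ k) * (X * φ) = _
        rw [heq, Polynomial.smul_eq_C_mul]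
        simp only [map_neg, map_mul]
        ring
      have hψ : L' ⟨φ, hφmem⟩ = (-(μ k * v)) • (⟨φ, hφmem⟩ : degreeLT ℝ n) := by
        apply Subtype.ext
        show (L' ⟨φ, hφmem⟩ : ℝ[X]) = (-(μ k * v)) • φ
        rw [hL'set]
        rw [LinearMap.restrict_apply]
        exact hLφ
      have hev : Module.End.HasEigenvalue L' (-(μ k * v)) := by
        apply Module.End.hasEigenvalue_of_hasEigenvector (x := ⟨φ, hφmem⟩)
        refine ⟨Module.End.mem_eigenspace_iff.mpr hψ, ?_⟩
        simp only [ne_eq, Submodule.mk_eq_zero]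
        exact hφne
      have hmin : (minpoly ℝ L').IsRoot (-(μ k * v)) :=
        Module.End.hasEigenvalue_iff_isRoot.mp hev
      exact dvd_trans (dvd_iff_isRoot.mpr hmin) (LinearMap.minpoly_dvd_charpoly L')
    have hμ0 : μ k ≠ 0 := by
      rw [hμ]
      have : (1:ℝ) ≤ (k:ℝ) := by exact_mod_cast hk1
      have : (0:ℝ) < (k:ℝ) * ((k:ℝ) - 1 + b2) := by
        rw [hb2def]; nlinarith
      linarith [this]
    have hinj : Function.Injective (fun v : ℝ => -(μ k * v)) := by
      intro x y hxy
      simp only [neg_inj] at hxy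
      exact mul_left_cancel₀ hμ0 hxy
    have hPdvd : (∏ v ∈ V k, (X - Polynomial.C (-(μ k * v)))) ∣ L'.charpoly := by
      apply Finset.prod_dvd_of_coprime
      · exact (Polynomial.pairwise_coprime_X_sub_C hinj).set_pairwise _
      · intro v hv; exact hroot v hv
    have hfin : Module.finrank ℝ (Polynomial.degreeLT ℝ n) = n := by
      rw [Module.finrank_eq_card_basis bs, Fintype.card_fin]
    have hPmonic : (∏ v ∈ V k, (X - Polynomial.C (-(μ k * v)))).Monic :=
      monic_prod_of_monic _ _ (fun v _ => monic_X_sub_C _)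
    have hPdeg : (∏ v ∈ V k, (X - Polynomial.C (-(μ k * v)))).natDegree = n := by
      rw [natDegree_prod_of_monic _ _ (fun v _ => monic_X_sub_C _)]
      rw [Finset.sum_congr rfl (fun v _ => natDegree_X_sub_C (-(μ k * v)))]
      rw [Finset.sum_const, smul_eq_mul, mul_one, hcard k hk1]
    have hchar_deg : L'.charpoly.natDegree = n := by
      rw [LinearMap.charpoly_natDegree, hfin]
    have hPeq : L'.charpoly = ∏ v ∈ V k, (X - Polynomial.C (-(μ k * v))) :=
      Polynomial.eq_of_monic_of_dvd_of_natDegree_le hPmonic (LinearMap.charpoly_monic L')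
        hPdvd (le_of_eq (hchar_deg.trans hPdeg.symm))
    have hcoeff : L'.charpoly.coeff k = μ k * (∑ v ∈ V k, v) := by
      rw [hPeq]
      have hpos : 0 < (V k).card := by rw [hcard k hk1]; omega
      have hc := Polynomial.prod_X_sub_C_coeff_card_pred (V k) (fun v => -(μ k * v)) hpos
      rw [hcard k hk1] at hc
      simp only [Nat.add_sub_cancel] at hc
      rw [hc]
      rw [Finset.sum_neg_distrib, neg_neg, Finset.mul_sum]
    -- trace computation
    set Mx := LinearMap.toMatrix bs bs L' with hMxset
    have htr : Matrix.trace Mx = -(L'.charpoly.coeff k) := by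
      have h1 := Matrix.trace_eq_neg_charpoly_coeff Mx
      rw [LinearMap.charpoly_toMatrix L' bs] at h1
      rw [h1]
      congr 1
      congr 1
      simp [Fintype.card_fin, hn]
    have hLX : ∀ j : ℕ, (L (X^j : ℝ[X])).coeff j
        = a2 * ((j:ℝ) * ((j:ℝ)-1)) + b1 * (j:ℝ) := by
      intro j
      match j with
      | 0 => rw [hLdef]; simp
      | 1 => rw [hLdef]; simp
      | (j+2) =>
        have hexp2 : L (X^(j+2) : ℝ[X])
            = C (((j:ℝ)+2)*((j:ℝ)+1)) * X^(j+3) + C (((j:ℝ)+2)*((j:ℝ)+1)*a2) * X^(j+2)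
              + C (((j:ℝ)+2)*((j:ℝ)+1)*a1) * X^(j+1) + C (((j:ℝ)+2)*((j:ℝ)+1)*a0) * X^j
              + C (((j:ℝ)+2)*b2) * X^(j+3) + C (((j:ℝ)+2)*b1) * X^(j+2)
              + C (((j:ℝ)+2)*b0) * X^(j+1) - C (μ k) * X^(j+3) := by
          rw [hLdef]
          rw [derivative_X_pow]
          rw [derivative_C_mul, derivative_X_pow]
          have e1 : j + 2 - 1 = j + 1 := by omega
          have e2 : j + 1 - 1 = j := by omega
          rw [e1, e2]
          simp only [Nat.cast_add, Nat.cast_ofNat, Nat.cast_one, map_mul, map_add]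
          ring
        rw [hexp2]
        simp only [coeff_sub, coeff_add, coeff_C_mul, coeff_X_pow]
        have h1 : ¬(j + 2 = j + 1) := by omega
        have h2 : ¬(j + 2 = j) := by omega
        have h3 : ¬(j + 2 = j + 3) := by omega
        simp only [if_true, if_neg h1, if_neg h2, if_neg h3]
        push_cast
        ring
    have hdiag : ∀ i : Fin n, Mx i i = a2 * ((i:ℝ) * ((i:ℝ)-1)) + b1 * (i:ℝ) := by
      intro i
      have hXmem : (X^(i:ℕ) : ℝ[X]) ∈ degreeLT ℝ n := by
        rw [mem_degreeLT, degree_X_pow]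
        exact_mod_cast i.isLt
      have hbi : bs i = (⟨X^(i:ℕ), hXmem⟩ : degreeLT ℝ n) := by
        have h1 : e ⟨X^(i:ℕ), hXmem⟩ = Pi.basisFun ℝ (Fin n) i := by
          funext j
          rw [heset]
          show (X^(i:ℕ) : ℝ[X]).coeff j = _
          rw [Pi.basisFun_apply]
          simp [Polynomial.coeff_X_pow, Pi.single_apply, Fin.ext_iff, eq_comm]
        rw [hbsset, Module.Basis.map_apply, ← h1, LinearEquiv.symm_apply_apply]
      rw [hMxset, LinearMap.toMatrix_apply]
      have hrepr : ∀ x : degreeLT ℝ n, bs.repr x i = (x : ℝ[X]).coeff i := by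
        intro x
        rw [hbsset, Module.Basis.map_repr]
        simp only [LinearEquiv.trans_apply, Pi.basisFun_repr, LinearEquiv.symm_symm]
        rw [heset]
        rfl
      rw [hrepr, hbi]
      have hcoe : ((L' ⟨X^(i:ℕ), hXmem⟩ : degreeLT ℝ n) : ℝ[X]) = L (X^(i:ℕ)) := by
        rw [hL'set, LinearMap.restrict_apply]
      rw [hcoe, hLX]
    have hgauss : ∀ m : ℕ, (∑ j ∈ Finset.range m, (a2 * ((j:ℝ) * ((j:ℝ)-1)) + b1 * (j:ℝ)))
        = a2 * ((m:ℝ)*((m:ℝ)-1)*((m:ℝ)-2))/3 + b1 * ((m:ℝ)*((m:ℝ)-1))/2 := by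
      intro m
      induction m with
      | zero => simp
      | succ p ih =>
        rw [Finset.sum_range_succ, ih]
        push_cast
        ring
    have htr2 : Matrix.trace Mx
        = a2 * (((k:ℝ)+1)*(k:ℝ)*((k:ℝ)-1))/3 + b1 * (((k:ℝ)+1)*(k:ℝ))/2 := by
      rw [Matrix.trace]
      have h1 : ∑ i : Fin n, Mx.diag i
          = ∑ i : Fin n, (a2 * ((i:ℝ) * ((i:ℝ)-1)) + b1 * (i:ℝ)) :=
        Finset.sum_congr rfl (fun i _ => hdiag i)
      rw [h1, Fin.sum_univ_eq_sum_range (fun j => (a2 * ((j:ℝ) * ((j:ℝ)-1)) + b1 * (j:ℝ))) n,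
        hgauss n, hn]
      push_cast
      ring
    rw [← hcoeff, ← neg_neg (L'.charpoly.coeff k), ← htr, htr2]
  -- positivity facts
  have hk2 : (2:ℝ) ≤ (k:ℝ) := by exact_mod_cast hk
  have hμ' : μ k = (k:ℝ) * ((k:ℝ) + c) := by rw [hμ, hcdef]; ring
  have hkc : (0:ℝ) < (k:ℝ) + c := by rw [hcdef]; linarith
  have hk0 : (0:ℝ) < (k:ℝ) := by linarith
  have hμ0 : μ k ≠ 0 := by rw [hμ']; positivity
  have hsum : (∑ v ∈ V k, v) = s/3 * (k:ℝ) + C₁ + (-D)/((k:ℝ)+c) := by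
    have h2 : μ k * (s/3 * (k:ℝ) + C₁ + (-D)/((k:ℝ)+c))
        = -(a2 * (((k:ℝ)+1)*(k:ℝ)*((k:ℝ)-1))/3 + b1 * (((k:ℝ)+1)*(k:ℝ))/2) := by
      rw [hμ', hC₁def, hDdef, ha2def]
      field_simp
      ring
    have := key.trans h2.symm
    exact mul_left_cancel₀ hμ0 this
  rw [hsum]
  have heq : s/3 * (k:ℝ) + C₁ + (-D)/((k:ℝ)+c) - s/3 * (k:ℝ) - C₁ = -D/((k:ℝ)+c) := by
    ring
  rw [heq, abs_div, abs_neg, abs_of_pos hkc, div_le_div_iff₀ hkc hk0]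
  nlinarith [abs_nonneg D]
end

section
/- Fix real numbers α₁ < α₂ < α₃ and positive reals ρ₁, ρ₂, ρ₃, and suppose that for every positive integer k the set V_k of Van Vleck zeros of order k has exactly k+1 elements. Then there exist real constants C₂ and M > 0 (depending only on the α_j and ρ_j) such that for all sufficiently large k, | Σ_{ν ∈ V_k} ν² − [ (α₁²+α₂²+α₃²)/5 + (2/15)(α₁α₂ + α₂α₃ + α₁α₃) ]·k − C₂ | ≤ M/k; in other words, the sum of the squares of the Van Vleck zeros of order k equals [ (α₁²+α₂²+α₃²)/5 + (2/15)(α₁α₂+α₂α₃+α₁α₃) ]·k + C₂ + O(1/k) as k → ∞. -/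
open Polynomial Finset

/-- If a `d × d` real matrix has `d` distinct eigenvalues (given as a finset `S` with
eigenvectors), then the trace of `M * M` is the sum of squares of the eigenvalues. -/
theorem trace_sq_eq_sum_sq {d : ℕ} (hd : 0 < d) (M : Matrix (Fin d) (Fin d) ℝ)
    (S : Finset ℝ) (hcard : S.card = d)
    (hvec : ∀ v ∈ S, ∃ c : Fin d → ℝ, c ≠ 0 ∧ M.mulVec c = v • c) :
    Matrix.trace (M * M) = ∑ v ∈ S, v ^ 2 := by
  classical
  have hS : S.Nonempty := Finset.card_pos.mp (hcard ▸ hd)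
  haveI : Nonempty {x // x ∈ S} := ⟨⟨hS.choose, hS.choose_spec⟩⟩
  set f : Module.End ℝ (Fin d → ℝ) := Matrix.toLin' M with hf
  choose c hc0 hcM using fun v : {x // x ∈ S} => hvec v.1 v.2
  have heig : ∀ v : {x // x ∈ S}, f.HasEigenvector (v : ℝ) (c v) := by
    intro v
    refine ⟨Module.End.mem_eigenspace_iff.mpr ?_, hc0 v⟩
    rw [hf, Matrix.toLin'_apply]
    exact hcM v
  have hli : LinearIndependent ℝ c :=
    f.eigenvectors_linearIndependent' (fun v : {x // x ∈ S} => (v : ℝ))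
      Subtype.coe_injective _ heig
  have hcardeq : Fintype.card {x // x ∈ S} = Module.finrank ℝ (Fin d → ℝ) := by
    rw [Fintype.card_coe, hcard, Module.finrank_fintype_fun_eq_card, Fintype.card_fin]
  let b : Module.Basis {x // x ∈ S} ℝ (Fin d → ℝ) :=
    basisOfLinearIndependentOfCardEqFinrank hli hcardeq
  have hb : ⇑b = c := coe_basisOfLinearIndependentOfCardEqFinrank hli hcardeq
  have htm : LinearMap.toMatrix b b f = Matrix.diagonal (fun v : {x // x ∈ S} => (v : ℝ)) := by
    ext i j
    rw [LinearMap.toMatrix_apply]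
    have : f (b j) = (j : ℝ) • b j := by
      rw [hb]; exact (heig j).apply_eq_smul
    rw [this, map_smul, Module.Basis.repr_self]
    rcases eq_or_ne i j with h | h
    · simp [h, Matrix.diagonal_apply_eq]
    · simp [Finsupp.single_apply, Matrix.diagonal_apply_ne _ h, Ne.symm h, h]
  have h1 : LinearMap.trace ℝ (Fin d → ℝ) (f * f) = Matrix.trace (M * M) := by
    rw [LinearMap.trace_eq_matrix_trace ℝ (Pi.basisFun ℝ (Fin d)),
      LinearMap.toMatrix_eq_toMatrix', LinearMap.toMatrix'_mul]
    rw [hf, LinearMap.toMatrix'_toLin']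
  have h2 : LinearMap.trace ℝ (Fin d → ℝ) (f * f) = ∑ v ∈ S, v ^ 2 := by
    rw [LinearMap.trace_eq_matrix_trace ℝ b]
    have : (f * f : Module.End ℝ (Fin d → ℝ)) = f ∘ₗ f := rfl
    rw [this, LinearMap.toMatrix_comp b b b, htm, Matrix.diagonal_mul_diagonal,
      Matrix.trace_diagonal]
    rw [← Finset.sum_coe_sort S (fun v => v ^ 2)]
    exact Finset.sum_congr rfl fun v _ => (sq (v:ℝ)).symm ▸ by ring
  rw [← h1, h2]

namespace VanVleckAux

/-- Sub-diagonal entry. -/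
noncomputable def entA (r μk : ℝ) (j : ℕ) : ℝ := 1 - ((j : ℝ) * ((j : ℝ) - 1) + 2 * r * j) / μk
/-- Diagonal entry. -/
noncomputable def entD (e1 b1 μk : ℝ) (j : ℕ) : ℝ := (e1 * j * ((j : ℝ) - 1) + b1 * j) / μk
/-- Super-diagonal entry. -/
noncomputable def entU (e2 b0 μk : ℝ) (j : ℕ) : ℝ := -((e2 * ((j : ℝ) - 1) * j + b0 * j) / μk)
/-- Second super-diagonal entry. -/
noncomputable def entW (e3 μk : ℝ) (j : ℕ) : ℝ := e3 * ((j : ℝ) - 1) * j / μk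

/-- The matrix entry function. -/
noncomputable def ent (e1 e2 e3 r b1 b0 μk : ℝ) (n j : ℕ) : ℝ :=
  (if n = j + 1 then entA r μk j else 0) + (if n = j then entD e1 b1 μk j else 0)
    + (if j = n + 1 then entU e2 b0 μk j else 0) + (if j = n + 2 then entW e3 μk j else 0)

lemma coeff_d2_mul_X3 (p : ℝ[X]) (m : ℕ) :
    (derivative (derivative p) * X ^ 3).coeff (m + 1) = ((m : ℝ) - 1) * m * p.coeff m := by
  match m with
  | 0 => rw [coeff_mul_X_pow']; norm_num
  | 1 => rw [coeff_mul_X_pow']; norm_num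
  | (j+2) =>
    have : j + 2 + 1 = j + 3 := by ring
    rw [this, coeff_mul_X_pow _ 3 j, coeff_derivative, coeff_derivative]
    push_cast; ring

lemma coeff_d2_mul_X2 (p : ℝ[X]) (m : ℕ) :
    (derivative (derivative p) * X ^ 2).coeff (m + 1) = ((m : ℝ) + 1) * m * p.coeff (m + 1) := by
  match m with
  | 0 => rw [coeff_mul_X_pow']; norm_num
  | (j+1) =>
    have : j + 1 + 1 = j + 2 := by ring
    rw [this, coeff_mul_X_pow _ 2 j, coeff_derivative, coeff_derivative]
    push_cast; ring

lemma coeff_d2_mul_X1 (p : ℝ[X]) (m : ℕ) :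
    (derivative (derivative p) * X ^ 1).coeff (m + 1) = ((m : ℝ) + 2) * ((m : ℝ) + 1) * p.coeff (m + 2) := by
  rw [coeff_mul_X_pow _ 1 m, coeff_derivative, coeff_derivative]
  push_cast; ring

lemma coeff_d2 (p : ℝ[X]) (m : ℕ) :
    (derivative (derivative p)).coeff m = ((m : ℝ) + 2) * ((m : ℝ) + 1) * p.coeff (m + 2) := by
  rw [coeff_derivative, coeff_derivative]; push_cast; ring

lemma coeff_d1_mul_X2 (p : ℝ[X]) (m : ℕ) :
    (derivative p * X ^ 2).coeff (m + 1) = (m : ℝ) * p.coeff m := by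
  match m with
  | 0 => rw [coeff_mul_X_pow']; norm_num
  | (j+1) =>
    have : j + 1 + 1 = j + 2 := by ring
    rw [this, coeff_mul_X_pow _ 2 j, coeff_derivative]
    push_cast; ring

lemma coeff_d1_mul_X1 (p : ℝ[X]) (m : ℕ) :
    (derivative p * X ^ 1).coeff (m + 1) = ((m : ℝ) + 1) * p.coeff (m + 1) := by
  rw [coeff_mul_X_pow _ 1 m, coeff_derivative]; push_cast; ring

lemma coeff_d1 (p : ℝ[X]) (m : ℕ) :
    (derivative p).coeff m = ((m : ℝ) + 1) * p.coeff (m + 1) := by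
  rw [coeff_derivative]; push_cast; ring


/-- Row identity extracted from the Lamé differential equation. -/
lemma row_eq (e1 e2 e3 r b1 b0 μk v : ℝ) (hμ : μk ≠ 0) (φ : ℝ[X])
    (h : (X ^ 3 - C e1 * X ^ 2 + C e2 * X - C e3) * derivative (derivative φ)
        + (C (2 * r) * X ^ 2 - C b1 * X + C b0) * derivative φ
        = C μk * (X - C v) * φ) (n : ℕ) :
    (if n = 0 then 0 else entA r μk (n - 1) * φ.coeff (n - 1)) + entD e1 b1 μk n * φ.coeff n
      + entU e2 b0 μk (n + 1) * φ.coeff (n + 1) + entW e3 μk (n + 2) * φ.coeff (n + 2)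
      = v * φ.coeff n := by
  have h' : derivative (derivative φ) * X ^ 3 - C e1 * (derivative (derivative φ) * X ^ 2)
      + C e2 * (derivative (derivative φ) * X ^ 1) - C e3 * derivative (derivative φ)
      + C (2 * r) * (derivative φ * X ^ 2) - C b1 * (derivative φ * X ^ 1)
      + C b0 * derivative φ
      = C μk * (φ * X) - C μk * (C v * φ) := by linear_combination h
  match n with
  | 0 =>
    have hc := congrArg (fun p : ℝ[X] => p.coeff 0) h'
    simp only [coeff_add, coeff_sub, coeff_C_mul, coeff_mul_X_pow', coeff_d2, coeff_d1] at hc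
    norm_num at hc
    simp only [if_pos rfl, entD, entU, entW]
    push_cast
    field_simp
    linear_combination -hc
  | (m+1) =>
    have hc := congrArg (fun p : ℝ[X] => p.coeff (m + 1)) h'
    simp only [coeff_add, coeff_sub, coeff_C_mul, coeff_d2_mul_X3, coeff_d2_mul_X2,
      coeff_d2_mul_X1, coeff_d2, coeff_d1_mul_X2, coeff_d1_mul_X1, coeff_d1,
      coeff_mul_X] at hc
    have hne : m + 1 ≠ 0 := Nat.succ_ne_zero m
    rw [if_neg hne]
    simp only [Nat.add_sub_cancel, entA, entD, entU, entW]
    push_cast at hc ⊢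
    field_simp
    linear_combination -hc

lemma sum_row (e1 e2 e3 r b1 b0 μk : ℝ) (k n : ℕ) (hn : n ≤ k) (c : ℕ → ℝ)
    (hc : ∀ j, k < j → c j = 0) :
    ∑ j ∈ Finset.range (k + 1), ent e1 e2 e3 r b1 b0 μk n j * c j
      = (if n = 0 then 0 else entA r μk (n - 1) * c (n - 1)) + entD e1 b1 μk n * c n
        + entU e2 b0 μk (n + 1) * c (n + 1) + entW e3 μk (n + 2) * c (n + 2) := by
  have hext : ∑ j ∈ Finset.range (k + 1), ent e1 e2 e3 r b1 b0 μk n j * c j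
      = ∑ j ∈ Finset.range (k + 3), ent e1 e2 e3 r b1 b0 μk n j * c j := by
    refine Finset.sum_subset (Finset.range_subset_range.mpr (by omega)) fun j _ hj => ?_
    rw [hc j (by simpa using hj), mul_zero]
  rw [hext]
  simp only [ent, add_mul, Finset.sum_add_distrib, ite_mul, zero_mul]
  congr 1
  congr 1
  congr 1
  · -- subdiagonal
    match n with
    | 0 => simp
    | (m+1) =>
      simp only [add_left_inj, Finset.sum_ite_eq, Finset.mem_range, Nat.add_sub_cancel]
      rw [if_pos (by omega), if_neg (Nat.succ_ne_zero m)]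
  · simp only [Finset.sum_ite_eq, Finset.mem_range]
    rw [if_pos (by omega)]
  · simp only [Finset.sum_ite_eq', Finset.mem_range]
    rw [if_pos (by omega)]
  · simp only [Finset.sum_ite_eq', Finset.mem_range]
    rw [if_pos (by omega)]

lemma ent_mul_ent (e1 e2 e3 r b1 b0 μk : ℝ) (i j : ℕ) :
    ent e1 e2 e3 r b1 b0 μk i j * ent e1 e2 e3 r b1 b0 μk j i
      = (if j = i then entD e1 b1 μk i * entD e1 b1 μk i else 0)
        + (if j = i + 1 then entA r μk i * entU e2 b0 μk j else 0)
        + (if i = j + 1 then entA r μk j * entU e2 b0 μk i else 0) := by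
  simp only [ent]
  split_ifs <;> first | omega | (subst_vars; ring1)

lemma sum_shift (k : ℕ) (F : ℕ → ℝ) :
    (∑ i ∈ Finset.range (k + 1), if i + 1 ∈ Finset.range (k + 1) then F i else 0)
      = ∑ i ∈ Finset.range k, F i := by
  rw [Finset.sum_range_succ, if_neg (by simp), add_zero]
  exact Finset.sum_congr rfl fun i hi =>
    if_pos (Finset.mem_range.mpr (by have := Finset.mem_range.mp hi; omega))

lemma trace_double_sum (e1 e2 e3 r b1 b0 μk : ℝ) (k : ℕ) :
    ∑ i ∈ Finset.range (k + 1), ∑ j ∈ Finset.range (k + 1),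
        ent e1 e2 e3 r b1 b0 μk i j * ent e1 e2 e3 r b1 b0 μk j i
      = ∑ i ∈ Finset.range (k + 1), entD e1 b1 μk i * entD e1 b1 μk i
        + 2 * ∑ i ∈ Finset.range k, entA r μk i * entU e2 b0 μk (i + 1) := by
  have hsplit : ∀ i ∈ Finset.range (k + 1),
      ∑ j ∈ Finset.range (k + 1),
          ent e1 e2 e3 r b1 b0 μk i j * ent e1 e2 e3 r b1 b0 μk j i
        = (∑ j ∈ Finset.range (k + 1), if j = i then entD e1 b1 μk i * entD e1 b1 μk i else 0)
          + (∑ j ∈ Finset.range (k + 1), if j = i + 1 then entA r μk i * entU e2 b0 μk j else 0)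
          + (∑ j ∈ Finset.range (k + 1), if i = j + 1 then entA r μk j * entU e2 b0 μk i else 0) := by
    intro i _
    rw [← Finset.sum_add_distrib, ← Finset.sum_add_distrib]
    exact Finset.sum_congr rfl fun j _ => ent_mul_ent e1 e2 e3 r b1 b0 μk i j
  rw [Finset.sum_congr rfl hsplit, Finset.sum_add_distrib, Finset.sum_add_distrib]
  have hA : ∑ i ∈ Finset.range (k + 1),
      (∑ j ∈ Finset.range (k + 1), if j = i then entD e1 b1 μk i * entD e1 b1 μk i else 0)
      = ∑ i ∈ Finset.range (k + 1), entD e1 b1 μk i * entD e1 b1 μk i :=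
    Finset.sum_congr rfl fun i hi => by
      rw [Finset.sum_ite_eq' (Finset.range (k + 1)) i, if_pos hi]
  have hB : ∑ i ∈ Finset.range (k + 1),
      (∑ j ∈ Finset.range (k + 1), if j = i + 1 then entA r μk i * entU e2 b0 μk j else 0)
      = ∑ i ∈ Finset.range k, entA r μk i * entU e2 b0 μk (i + 1) := by
    rw [← sum_shift k fun i => entA r μk i * entU e2 b0 μk (i + 1)]
    exact Finset.sum_congr rfl fun i _ =>
      Finset.sum_ite_eq' (Finset.range (k + 1)) (i + 1) fun j => entA r μk i * entU e2 b0 μk j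
  have hC : ∑ i ∈ Finset.range (k + 1),
      (∑ j ∈ Finset.range (k + 1), if i = j + 1 then entA r μk j * entU e2 b0 μk i else 0)
      = ∑ i ∈ Finset.range k, entA r μk i * entU e2 b0 μk (i + 1) := by
    rw [Finset.sum_comm, ← sum_shift k fun i => entA r μk i * entU e2 b0 μk (i + 1)]
    exact Finset.sum_congr rfl fun j _ =>
      Finset.sum_ite_eq' (Finset.range (k + 1)) (j + 1) fun i => entA r μk j * entU e2 b0 μk i
  rw [hA, hB, hC]
  ring

lemma sum_F1 (e1 b1 : ℝ) : ∀ n : ℕ,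
    ∑ i ∈ Finset.range n, (e1 * i * ((i : ℝ) - 1) + b1 * i) ^ 2
      = e1 ^ 2 * ((n : ℝ) ^ 5 / 5 - (n : ℝ) ^ 4 + 5 * (n : ℝ) ^ 3 / 3 - (n : ℝ) ^ 2
            + 2 * (n : ℝ) / 15)
        + e1 * b1 * ((n : ℝ) ^ 4 / 2 - 5 * (n : ℝ) ^ 3 / 3 + 3 * (n : ℝ) ^ 2 / 2 - (n : ℝ) / 3)
        + b1 ^ 2 * ((n : ℝ) ^ 3 / 3 - (n : ℝ) ^ 2 / 2 + (n : ℝ) / 6) := by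
  intro n
  induction n with
  | zero => simp
  | succ n ih => rw [Finset.sum_range_succ, ih]; push_cast; ring

lemma sum_G0 (e2 b0 : ℝ) : ∀ n : ℕ,
    ∑ i ∈ Finset.range n, (e2 * i * ((i : ℝ) + 1) + b0 * ((i : ℝ) + 1))
      = e2 * ((n : ℝ) ^ 3 / 3 - (n : ℝ) / 3) + b0 * ((n : ℝ) ^ 2 / 2 + (n : ℝ) / 2) := by
  intro n
  induction n with
  | zero => simp
  | succ n ih => rw [Finset.sum_range_succ, ih]; push_cast; ring

lemma sum_G1 (e2 b0 r : ℝ) : ∀ n : ℕ,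
    ∑ i ∈ Finset.range n, ((i : ℝ) * ((i : ℝ) - 1 + 2 * r))
        * (e2 * i * ((i : ℝ) + 1) + b0 * ((i : ℝ) + 1))
      = e2 * ((n : ℝ) ^ 5 / 5 + r * (n : ℝ) ^ 4 / 2 - (n : ℝ) ^ 4 / 2 - r * (n : ℝ) ^ 3 / 3
            - r * (n : ℝ) ^ 2 / 2 + (n : ℝ) ^ 2 / 2 + r * (n : ℝ) / 3 - (n : ℝ) / 5)
        + b0 * ((n : ℝ) ^ 4 / 4 + 2 * r * (n : ℝ) ^ 3 / 3 - (n : ℝ) ^ 3 / 2 - (n : ℝ) ^ 2 / 4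
            - 2 * r * (n : ℝ) / 3 + (n : ℝ) / 2) := by
  intro n
  induction n with
  | zero => simp
  | succ n ih => rw [Finset.sum_range_succ, ih]; push_cast; ring

set_option maxHeartbeats 1000000 in
/-- The exact value of the trace sum as a rational function, with asymptotic bound. -/
lemma combined_bound (e1 e2 e3 b0 b1 r : ℝ) (hr : 0 < r) :
    ∃ C2 M : ℝ, 0 < M ∧ ∀ k : ℕ, 2 ≤ k → ∀ μk : ℝ,
      μk = (k : ℝ) * ((k : ℝ) - 1 + 2 * r) →
      |(∑ i ∈ Finset.range (k + 1), entD e1 b1 μk i * entD e1 b1 μk i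
          + 2 * ∑ i ∈ Finset.range k, entA r μk i * entU e2 b0 μk (i + 1))
        - (e1 ^ 2 / 5 - 4 * e2 / 15) * (k : ℝ) - C2| ≤ M / (k : ℝ) := by
  set d3 : ℝ := 12/5*e1^2*r^2 - 12/5*e1^2*r + 4/15*e1^2 - 2*e1*b1*r + 4/3*e1*b1
    - 28/15*e2*r^2 + 16/5*e2*r - 4/5*e2 + 4/3*b0*r - 2*b0 + 1/3*b1^2 with hd3
  set d2 : ℝ := 16/5*e1^2*r^3 - 24/5*e1^2*r^2 + 12/5*e1^2*r - 2/5*e1^2 - 2*e1*b1*r^2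
    + 2*e1*b1*r - e1*b1 - 44/15*e2*r^3 + 32/5*e2*r^2 - 58/15*e2*r + 6/5*e2
    + 2*b0*r^2 - 4*b0*r + b0 + 1/2*b1^2 with hd2
  set d1 : ℝ := 2/15*e1^2 - 1/3*e1*b1 + 2/3*e2*r - 2/5*e2 - 4/3*b0*r + b0 + 1/6*b1^2 with hd1
  refine ⟨(2*e1^2 - 4*e1^2*r)/5 + e1*b1/2 + (11*e2*r - 13*e2)/15 - b0/2,
    4*(|d3| + |d2| + |d1|) + 1, by positivity, ?_⟩
  intro k hk μk hμk
  set K : ℝ := (k : ℝ) with hK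
  have hK2 : (2 : ℝ) ≤ K := by rw [hK]; exact_mod_cast hk
  have hK0 : (0 : ℝ) < K := by linarith
  have hμpos : 0 < μk := by
    rw [hμk]; exact mul_pos hK0 (by linarith)
  have hμ : μk ≠ 0 := ne_of_gt hμpos
  -- closed form for the diagonal sum
  have h1 : ∑ i ∈ Finset.range (k + 1), entD e1 b1 μk i * entD e1 b1 μk i
      = (∑ i ∈ Finset.range (k + 1), (e1 * i * ((i : ℝ) - 1) + b1 * i) ^ 2) / μk ^ 2 := by
    rw [Finset.sum_div]
    exact Finset.sum_congr rfl fun i _ => by simp only [entD]; ring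
  -- closed form for the off-diagonal sum
  have h2 : ∑ i ∈ Finset.range k, entA r μk i * entU e2 b0 μk (i + 1)
      = -((μk * (∑ i ∈ Finset.range k, (e2 * i * ((i : ℝ) + 1) + b0 * ((i : ℝ) + 1)))
          - ∑ i ∈ Finset.range k, ((i : ℝ) * ((i : ℝ) - 1 + 2 * r))
              * (e2 * i * ((i : ℝ) + 1) + b0 * ((i : ℝ) + 1))) / μk ^ 2) := by
    have step : ∀ i ∈ Finset.range k, entA r μk i * entU e2 b0 μk (i + 1)
        = -((μk * (e2 * i * ((i : ℝ) + 1) + b0 * ((i : ℝ) + 1))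
            - ((i : ℝ) * ((i : ℝ) - 1 + 2 * r)) * (e2 * i * ((i : ℝ) + 1) + b0 * ((i : ℝ) + 1)))
            / μk ^ 2) := by
      intro i _
      simp only [entA, entU]
      push_cast
      field_simp
      ring
    rw [Finset.sum_congr rfl step, Finset.sum_neg_distrib, ← Finset.sum_div,
      Finset.sum_sub_distrib, ← Finset.mul_sum]
  rw [h1, h2, sum_F1, sum_G0, sum_G1]
  have hμ2ne : (μk ^ 2 : ℝ) ≠ 0 := by positivity
  have hinv : μk ^ 2 * (μk ^ 2)⁻¹ = 1 := mul_inv_cancel₀ hμ2ne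
  have hpoly : (e1 ^ 2 * ((K+1) ^ 5 / 5 - (K+1) ^ 4 + 5 * (K+1) ^ 3 / 3 - (K+1) ^ 2
          + 2 * (K+1) / 15)
        + e1 * b1 * ((K+1) ^ 4 / 2 - 5 * (K+1) ^ 3 / 3 + 3 * (K+1) ^ 2 / 2 - (K+1) / 3)
        + b1 ^ 2 * ((K+1) ^ 3 / 3 - (K+1) ^ 2 / 2 + (K+1) / 6))
      - 2 * (μk * (e2 * (K ^ 3 / 3 - K / 3) + b0 * (K ^ 2 / 2 + K / 2))
        - (e2 * (K ^ 5 / 5 + r * K ^ 4 / 2 - K ^ 4 / 2 - r * K ^ 3 / 3 - r * K ^ 2 / 2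
            + K ^ 2 / 2 + r * K / 3 - K / 5)
          + b0 * (K ^ 4 / 4 + 2 * r * K ^ 3 / 3 - K ^ 3 / 2 - K ^ 2 / 4 - 2 * r * K / 3 + K / 2)))
      - ((e1 ^ 2 / 5 - 4 * e2 / 15) * K + ((2*e1^2 - 4*e1^2*r)/5 + e1*b1/2
          + (11*e2*r - 13*e2)/15 - b0/2)) * μk ^ 2
      = d3 * K ^ 3 + d2 * K ^ 2 + d1 * K := by
    rw [hμk, hd1, hd2, hd3]; ring
  have key : (e1 ^ 2 * ((↑(k+1) : ℝ) ^ 5 / 5 - (↑(k+1) : ℝ) ^ 4 + 5 * (↑(k+1) : ℝ) ^ 3 / 3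
          - (↑(k+1) : ℝ) ^ 2 + 2 * (↑(k+1) : ℝ) / 15)
        + e1 * b1 * ((↑(k+1) : ℝ) ^ 4 / 2 - 5 * (↑(k+1) : ℝ) ^ 3 / 3 + 3 * (↑(k+1) : ℝ) ^ 2 / 2
          - (↑(k+1) : ℝ) / 3)
        + b1 ^ 2 * ((↑(k+1) : ℝ) ^ 3 / 3 - (↑(k+1) : ℝ) ^ 2 / 2 + (↑(k+1) : ℝ) / 6)) / μk ^ 2
      + 2 * -((μk * (e2 * (K ^ 3 / 3 - K / 3) + b0 * (K ^ 2 / 2 + K / 2))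
          - (e2 * (K ^ 5 / 5 + r * K ^ 4 / 2 - K ^ 4 / 2 - r * K ^ 3 / 3 - r * K ^ 2 / 2
              + K ^ 2 / 2 + r * K / 3 - K / 5)
            + b0 * (K ^ 4 / 4 + 2 * r * K ^ 3 / 3 - K ^ 3 / 2 - K ^ 2 / 4 - 2 * r * K / 3
              + K / 2))) / μk ^ 2)
      - (e1 ^ 2 / 5 - 4 * e2 / 15) * K
      - ((2*e1^2 - 4*e1^2*r)/5 + e1*b1/2 + (11*e2*r - 13*e2)/15 - b0/2)
      = (d3 * K ^ 3 + d2 * K ^ 2 + d1 * K) / μk ^ 2 := by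
    push_cast
    linear_combination (μk ^ 2)⁻¹ * hpoly + ((e1 ^ 2 / 5 - 4 * e2 / 15) * K
      + ((2*e1^2 - 4*e1^2*r)/5 + e1*b1/2 + (11*e2*r - 13*e2)/15 - b0/2)) * hinv
  rw [key]
  -- now bound the remainder
  have hnum : |d3 * K ^ 3 + d2 * K ^ 2 + d1 * K| ≤ (|d3| + |d2| + |d1|) * K ^ 3 := by
    have t1 : |d3 * K ^ 3 + d2 * K ^ 2 + d1 * K| ≤ |d3| * K ^ 3 + |d2| * K ^ 2 + |d1| * K := by
      calc |d3 * K ^ 3 + d2 * K ^ 2 + d1 * K|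
          ≤ |d3 * K ^ 3 + d2 * K ^ 2| + |d1 * K| := abs_add_le _ _
        _ ≤ |d3 * K ^ 3| + |d2 * K ^ 2| + |d1 * K| := by
            have := abs_add_le (d3 * K ^ 3) (d2 * K ^ 2); linarith
        _ = |d3| * K ^ 3 + |d2| * K ^ 2 + |d1| * K := by
            rw [abs_mul, abs_mul, abs_mul, abs_pow, abs_pow, abs_of_pos hK0]
    have hK1 : (1 : ℝ) ≤ K := by linarith
    have hK3 : K ^ 2 ≤ K ^ 3 := pow_le_pow_right₀ hK1 (by norm_num)
    have hK4 : K ≤ K ^ 3 := by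
      calc K = K ^ 1 := (pow_one K).symm
        _ ≤ K ^ 3 := pow_le_pow_right₀ hK1 (by norm_num)
    have e2' := mul_le_mul_of_nonneg_left hK3 (abs_nonneg d2)
    have e1' := mul_le_mul_of_nonneg_left hK4 (abs_nonneg d1)
    have expand : (|d3| + |d2| + |d1|) * K ^ 3 = |d3| * K ^ 3 + |d2| * K ^ 3 + |d1| * K ^ 3 := by
      ring
    linarith
  have hμK : K ^ 2 / 2 ≤ μk := by
    have h0 : 0 ≤ K * (K / 2 - 1 + 2 * r) := mul_nonneg hK0.le (by linarith)
    have expand2 : K * (K - 1 + 2 * r) = K ^ 2 / 2 + K * (K / 2 - 1 + 2 * r) := by ring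
    rw [hμk, expand2]; linarith
  have hμ2 : K ^ 4 / 4 ≤ μk ^ 2 := by
    have h0 : (0 : ℝ) ≤ K ^ 2 / 2 := by positivity
    have hmm := mul_le_mul hμK hμK h0 hμpos.le
    calc K ^ 4 / 4 = K ^ 2 / 2 * (K ^ 2 / 2) := by ring
      _ ≤ μk * μk := hmm
      _ = μk ^ 2 := (sq μk).symm
  have habs : |(d3 * K ^ 3 + d2 * K ^ 2 + d1 * K) / μk ^ 2|
      = |d3 * K ^ 3 + d2 * K ^ 2 + d1 * K| / μk ^ 2 := by
    rw [abs_div, abs_of_pos (by positivity : (0:ℝ) < μk ^ 2)]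
  rw [habs]
  have hK40 : (0:ℝ) < K ^ 4 / 4 := by positivity
  calc |d3 * K ^ 3 + d2 * K ^ 2 + d1 * K| / μk ^ 2
      ≤ ((|d3| + |d2| + |d1|) * K ^ 3) / (K ^ 4 / 4) :=
        div_le_div₀ (by positivity) hnum hK40 hμ2
    _ = 4 * (|d3| + |d2| + |d1|) / K := by field_simp
    _ ≤ (4 * (|d3| + |d2| + |d1|) + 1) / K := by
        gcongr
        linarith

end VanVleckAux


open VanVleckAux in
/-- Asymptotics of the sum of the squares of the Van Vleck zeros of order `k`. -/
theorem vanVleck_zero_sum_sq_asymptotics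
    (α₁ α₂ α₃ ρ₁ ρ₂ ρ₃ : ℝ)
    (h12 : α₁ < α₂) (h23 : α₂ < α₃)
    (hρ₁ : 0 < ρ₁) (hρ₂ : 0 < ρ₂) (hρ₃ : 0 < ρ₃)
    (A B : ℝ[X])
    (hA : A = (X - C α₁) * (X - C α₂) * (X - C α₃))
    (hB : B = C (2 * ρ₁) * ((X - C α₂) * (X - C α₃))
            + C (2 * ρ₂) * ((X - C α₁) * (X - C α₃))
            + C (2 * ρ₃) * ((X - C α₁) * (X - C α₂)))
    (μ : ℕ → ℝ)
    (hμ : ∀ j : ℕ, μ j = (j : ℝ) * ((j : ℝ) - 1 + 2 * (ρ₁ + ρ₂ + ρ₃)))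
    (V : ℕ → Finset ℝ)
    (hV : ∀ k : ℕ, 1 ≤ k → ∀ v : ℝ, v ∈ V k ↔
      ∃ φ : ℝ[X], φ.degree = (k : ℕ) ∧
        A * derivative (derivative φ) + B * derivative φ
          = C (μ k) * (X - C v) * φ)
    (hcard : ∀ k : ℕ, 1 ≤ k → (V k).card = k + 1) :
    ∃ (C₂ M : ℝ), 0 < M ∧ ∃ N : ℕ, ∀ k : ℕ, N ≤ k →
      |(∑ v ∈ V k, v ^ 2)
        - ((α₁ ^ 2 + α₂ ^ 2 + α₃ ^ 2) / 5
            + 2 / 15 * (α₁ * α₂ + α₂ * α₃ + α₁ * α₃)) * (k : ℝ)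
        - C₂| ≤ M / (k : ℝ) := by
  classical
  obtain ⟨C2, M, hM, hbound⟩ := combined_bound (α₁ + α₂ + α₃)
    (α₁ * α₂ + α₁ * α₃ + α₂ * α₃) (α₁ * α₂ * α₃)
    (2 * (ρ₁ * α₂ * α₃ + ρ₂ * α₁ * α₃ + ρ₃ * α₁ * α₂))
    (2 * (ρ₁ * (α₂ + α₃) + ρ₂ * (α₁ + α₃) + ρ₃ * (α₁ + α₂)))
    (ρ₁ + ρ₂ + ρ₃) (by linarith)
  refine ⟨C2, M, hM, 2, fun k hk => ?_⟩
  have hk1 : 1 ≤ k := le_trans (by norm_num) hk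
  have hkR : (2 : ℝ) ≤ (k : ℝ) := by exact_mod_cast hk
  have hμk : μ k = (k : ℝ) * ((k : ℝ) - 1 + 2 * (ρ₁ + ρ₂ + ρ₃)) := hμ k
  have hμpos : 0 < μ k := by
    rw [hμk]
    exact mul_pos (by linarith) (by linarith)
  have hμne : μ k ≠ 0 := ne_of_gt hμpos
  -- notation
  set e1 : ℝ := α₁ + α₂ + α₃ with he1
  set e2 : ℝ := α₁ * α₂ + α₁ * α₃ + α₂ * α₃ with he2
  set e3 : ℝ := α₁ * α₂ * α₃ with he3
  set b0 : ℝ := 2 * (ρ₁ * α₂ * α₃ + ρ₂ * α₁ * α₃ + ρ₃ * α₁ * α₂) with hb0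
  set b1 : ℝ := 2 * (ρ₁ * (α₂ + α₃) + ρ₂ * (α₁ + α₃) + ρ₃ * (α₁ + α₂)) with hb1
  set r : ℝ := ρ₁ + ρ₂ + ρ₃ with hr
  set Mk : Matrix (Fin (k + 1)) (Fin (k + 1)) ℝ :=
    Matrix.of fun i j : Fin (k + 1) => ent e1 e2 e3 r b1 b0 (μ k) i j with hMk
  -- each Van Vleck zero is an eigenvalue of `Mk`
  have hvec : ∀ v ∈ V k, ∃ c : Fin (k + 1) → ℝ, c ≠ 0 ∧ Mk.mulVec c = v • c := by
    intro v hv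
    obtain ⟨φ, hdeg, heq⟩ := (hV k hk1 v).mp hv
    have hφne : φ ≠ 0 := by
      intro h0
      rw [h0, degree_zero] at hdeg
      exact absurd hdeg (by simp)
    have hnatdeg : φ.natDegree = k := natDegree_eq_of_degree_eq_some hdeg
    have hck : φ.coeff k ≠ 0 := by
      rw [← hnatdeg]
      exact leadingCoeff_ne_zero.mpr hφne
    have heq' : (X ^ 3 - C e1 * X ^ 2 + C e2 * X - C e3) * derivative (derivative φ)
        + (C (2 * r) * X ^ 2 - C b1 * X + C b0) * derivative φ
        = C (μ k) * (X - C v) * φ := by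
      rw [hA, hB] at heq
      rw [he1, he2, he3, hb0, hb1, hr]
      simp only [C_add, C_mul] at heq ⊢
      linear_combination heq
    refine ⟨fun i => φ.coeff i, ?_, ?_⟩
    · intro h0
      exact hck (congrFun h0 ⟨k, Nat.lt_succ_self k⟩)
    · funext i
      have hile : (i : ℕ) ≤ k := Nat.lt_succ_iff.mp i.isLt
      have hczero : ∀ j, k < j → φ.coeff j = 0 := fun j hj =>
        coeff_eq_zero_of_natDegree_lt (hnatdeg ▸ hj)
      have hstep1 : Mk.mulVec (fun i => φ.coeff i) i
          = ∑ j ∈ Finset.range (k + 1), ent e1 e2 e3 r b1 b0 (μ k) (i : ℕ) j * φ.coeff j := by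
        rw [Matrix.mulVec, dotProduct]
        exact Fin.sum_univ_eq_sum_range
          (fun j => ent e1 e2 e3 r b1 b0 (μ k) (i : ℕ) j * φ.coeff j) (k + 1)
      rw [hstep1, sum_row e1 e2 e3 r b1 b0 (μ k) k (i : ℕ) hile (fun j => φ.coeff j) hczero,
        row_eq e1 e2 e3 r b1 b0 (μ k) v hμne φ heq' (i : ℕ)]
      simp
  -- the sum of squares equals the trace of `Mk * Mk`
  have hsum : ∑ v ∈ V k, v ^ 2 = Matrix.trace (Mk * Mk) :=
    (trace_sq_eq_sum_sq (Nat.succ_pos k) Mk (V k) (hcard k hk1) hvec).symm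
  have htr : Matrix.trace (Mk * Mk)
      = ∑ i ∈ Finset.range (k + 1), ∑ j ∈ Finset.range (k + 1),
          ent e1 e2 e3 r b1 b0 (μ k) i j * ent e1 e2 e3 r b1 b0 (μ k) j i := by
    calc Matrix.trace (Mk * Mk)
        = ∑ i : Fin (k + 1), ∑ j : Fin (k + 1),
            ent e1 e2 e3 r b1 b0 (μ k) (i : ℕ) (j : ℕ)
              * ent e1 e2 e3 r b1 b0 (μ k) (j : ℕ) (i : ℕ) := by
          simp [Matrix.trace, Matrix.diag, Matrix.mul_apply, hMk]
      _ = ∑ i : Fin (k + 1), ∑ j ∈ Finset.range (k + 1),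
            ent e1 e2 e3 r b1 b0 (μ k) (i : ℕ) j * ent e1 e2 e3 r b1 b0 (μ k) j (i : ℕ) :=
          Finset.sum_congr rfl fun i _ => Fin.sum_univ_eq_sum_range
            (fun j => ent e1 e2 e3 r b1 b0 (μ k) (i : ℕ) j
              * ent e1 e2 e3 r b1 b0 (μ k) j (i : ℕ)) (k + 1)
      _ = ∑ i ∈ Finset.range (k + 1), ∑ j ∈ Finset.range (k + 1),
            ent e1 e2 e3 r b1 b0 (μ k) i j * ent e1 e2 e3 r b1 b0 (μ k) j i :=
          Fin.sum_univ_eq_sum_range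
            (fun i => ∑ j ∈ Finset.range (k + 1),
              ent e1 e2 e3 r b1 b0 (μ k) i j * ent e1 e2 e3 r b1 b0 (μ k) j i) (k + 1)
  have hcoef : (α₁ ^ 2 + α₂ ^ 2 + α₃ ^ 2) / 5 + 2 / 15 * (α₁ * α₂ + α₂ * α₃ + α₁ * α₃)
      = e1 ^ 2 / 5 - 4 * e2 / 15 := by rw [he1, he2]; ring
  rw [hsum, htr, trace_double_sum, hcoef]
  exact hbound k hk (μ k) hμk
end

section
/- Let α₁, …, α_n be distinct complex numbers, let ρ₁, …, ρ_n be positive reals, set A(z) = ∏_{j=1}^{n}(z−α_j) and B(z) = Σ_{j=1}^{n} 2ρ_j ∏_{i≠j}(z−α_i), and let V be any polynomial. Suppose the nonzero polynomial φ(z) = c·∏_{i=1}^{l}(z−z_i) (roots z₁, …, z_l listed with multiplicity, c ≠ 0) satisfies A φ'' + B φ' = V φ identically. If z_r is a root of φ with φ'(z_r) ≠ 0 and z_r ∉ {α₁, …, α_n}, then Σ_{j≠r} 1/(z_r − z_j) + Σ_{j=1}^{n} ρ_j/(z_r − α_j) = 0. -/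
open Polynomial

private lemma derivative_finset_prod {ι : Type*} [DecidableEq ι] (s : Finset ι)
    (f : ι → ℂ[X]) :
    derivative (∏ i ∈ s, f i)
      = ∑ i ∈ s, (∏ j ∈ s.erase i, f j) * derivative (f i) := by
  classical
  induction s using Finset.induction_on with
  | empty => simp
  | insert _ _ hx ih =>
    rename_i a s
    rw [Finset.prod_insert hx, derivative_mul, ih, Finset.sum_insert hx,
      Finset.erase_insert hx]
    rw [Finset.mul_sum]
    congr 1
    · ring
    · refine Finset.sum_congr rfl fun j hj => ?_
      rw [Finset.erase_insert_of_ne (by rintro rfl; exact hx hj),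
        Finset.prod_insert (fun h => hx (Finset.mem_of_mem_erase h))]
      ring

/-- Stieltjes' relation at a simple root of a polynomial solution of the
generalized Lamé equation. -/
theorem stieltjes_root_relation
    (n : ℕ) (α : Fin n → ℂ) (hα : Function.Injective α)
    (ρ : Fin n → ℝ) (hρ : ∀ j, 0 < ρ j)
    (A B V : ℂ[X])
    (hA : A = ∏ j : Fin n, (X - C (α j)))
    (hB : B = ∑ j : Fin n, C (2 * (ρ j : ℂ)) * ∏ i ∈ Finset.univ.erase j, (X - C (α i)))
    (l : ℕ) (c : ℂ) (hc : c ≠ 0) (z : Fin l → ℂ)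
    (φ : ℂ[X]) (hφ : φ = C c * ∏ i : Fin l, (X - C (z i)))
    (heq : A * derivative (derivative φ) + B * derivative φ = V * φ)
    (r : Fin l)
    (hsimple : (derivative φ).eval (z r) ≠ 0)
    (hnotα : ∀ j : Fin n, z r ≠ α j) :
    (∑ j ∈ Finset.univ.erase r, 1 / (z r - z j))
      + ∑ j : Fin n, (ρ j : ℂ) / (z r - α j) = 0 := by
  set S : Finset (Fin l) := Finset.univ.erase r with hS
  set ψ : ℂ[X] := C c * ∏ i ∈ S, (X - C (z i)) with hψ
  have hφψ : φ = (X - C (z r)) * ψ := by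
    rw [hφ, hψ, ← Finset.mul_prod_erase Finset.univ _ (Finset.mem_univ r)]
    ring
  have hder : derivative φ = ψ + (X - C (z r)) * derivative ψ := by
    rw [hφψ, derivative_mul]
    simp
  have hψval : ψ.eval (z r) ≠ 0 := by
    intro h; apply hsimple; rw [hder]; simp [h]
  have hφ'val : (derivative φ).eval (z r) = ψ.eval (z r) := by
    rw [hder]; simp
  have hder2 : (derivative (derivative φ)).eval (z r)
      = 2 * (derivative ψ).eval (z r) := by
    rw [hder, derivative_add, derivative_mul]
    simp; ring
  have hφval : φ.eval (z r) = 0 := by rw [hφψ]; simp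
  have hzne : ∀ j ∈ S, z r - z j ≠ 0 := by
    intro j hj hj0
    apply hψval
    rw [hψ]
    simp only [eval_mul, eval_C, eval_prod, eval_sub, eval_X]
    rw [Finset.prod_eq_zero hj hj0, mul_zero]
  have hαne : ∀ j : Fin n, z r - α j ≠ 0 := fun j => sub_ne_zero.mpr (hnotα j)
  have hAval : A.eval (z r) ≠ 0 := by
    rw [hA]
    simp only [eval_prod, eval_sub, eval_X, eval_C]
    exact Finset.prod_ne_zero_iff.mpr fun j _ => hαne j
  have hsum1 : (derivative ψ).eval (z r)
      = ψ.eval (z r) * ∑ j ∈ S, 1 / (z r - z j) := by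
    rw [hψ, derivative_mul, derivative_C, derivative_finset_prod]
    simp only [derivative_sub, derivative_X, derivative_C, sub_zero, mul_one,
      eval_add, eval_mul, eval_C, eval_prod, eval_finset_sum, eval_sub, eval_X,
      zero_mul, zero_add]
    rw [Finset.mul_sum, Finset.mul_sum]
    refine Finset.sum_congr rfl fun j hj => ?_
    rw [← Finset.mul_prod_erase S _ hj]
    have := hzne j hj
    field_simp
  have hBval : B.eval (z r)
      = A.eval (z r) * (2 * ∑ j : Fin n, (ρ j : ℂ) / (z r - α j)) := by
    rw [hA, hB]
    simp only [eval_finset_sum, eval_mul, eval_C, eval_prod, eval_sub, eval_X]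
    rw [Finset.mul_sum, Finset.mul_sum]
    refine Finset.sum_congr rfl fun j hj => ?_
    rw [← Finset.mul_prod_erase Finset.univ _ (Finset.mem_univ j)]
    have := hαne j
    field_simp
  have heqval := congrArg (Polynomial.eval (z r)) heq
  simp only [eval_add, eval_mul, hφval, hφ'val, hder2, mul_zero] at heqval
  have h2 : (2 : ℂ) * A.eval (z r) * ψ.eval (z r) ≠ 0 :=
    mul_ne_zero (mul_ne_zero two_ne_zero hAval) hψval
  apply mul_left_cancel₀ h2
  rw [mul_zero]
  linear_combination (-(2 * A.eval (z r))) * hsum1 - ψ.eval (z r) * hBval + heqval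
end

section
/- Let α₁, …, α_n be distinct complex numbers, let ρ₁, …, ρ_n be positive reals, set A(z) = ∏_{j=1}^{n}(z−α_j) and B(z) = Σ_{j=1}^{n} 2ρ_j ∏_{i≠j}(z−α_i), and let V be any polynomial. Then every zero of every nonzero polynomial solution φ of A φ'' + B φ' = V φ lies in the smallest convex polygon (the convex hull) containing α₁, …, α_n. -/
open Polynomial

lemma logderiv_multiset (y : ℂ) (M : Multiset ℂ) (h : ∀ r ∈ M, y ≠ r) :
    eval y (derivative (M.map (fun a => X - C a)).prod)
      = eval y (M.map (fun a => X - C a)).prod * (M.map fun r => (y - r)⁻¹).sum := by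
  induction M using Multiset.induction with
  | empty => simp
  | cons a M ih =>
    have hya : y - a ≠ 0 := sub_ne_zero.mpr (h a (Multiset.mem_cons_self a M))
    have ih' := ih (fun r hr => h r (Multiset.mem_cons_of_mem hr))
    simp only [Multiset.map_cons, Multiset.prod_cons, Multiset.sum_cons, derivative_mul,
      derivative_sub, derivative_X, derivative_C, sub_zero, one_mul, eval_add, eval_mul,
      eval_sub, eval_X, eval_C, ih']
    field_simp

lemma logderiv_eval (ψ : Polynomial ℂ) (y : ℂ) (hy : ψ.eval y ≠ 0) :
    eval y (derivative ψ) = eval y ψ * (ψ.roots.map (fun r => (y - r)⁻¹)).sum := by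
  have hψ : ψ ≠ 0 := fun h => hy (by simp [h])
  have hcard : Multiset.card ψ.roots = ψ.natDegree :=
    (splits_iff_card_roots).mp (IsAlgClosed.splits ψ)
  have hfac := C_leadingCoeff_mul_prod_multiset_X_sub_C (p := ψ) hcard
  have hne : ∀ r ∈ ψ.roots, y ≠ r := by
    intro r hr hyr
    exact hy (by rw [hyr]; exact (isRoot_of_mem_roots hr))
  set M := ψ.roots with hM
  have := logderiv_multiset y M hne
  rw [← hfac, derivative_C_mul, eval_C_mul, this, eval_C_mul]
  ring

lemma f_conj_inv (f : ℂ →L[ℝ] ℝ) (u : ℂ) :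
    f ((starRingEnd ℂ) u⁻¹) = (Complex.normSq u)⁻¹ * f u := by
  rw [Complex.inv_def, map_mul, Complex.conj_conj, Complex.conj_ofReal]
  rw [show u * (((Complex.normSq u)⁻¹ : ℝ) : ℂ) = ((Complex.normSq u)⁻¹ : ℝ) • u by
    rw [Complex.real_smul]; ring]
  rw [map_smul, smul_eq_mul]

/-- Every zero of a nonzero polynomial solution of the generalized Lamé equation
lies in the convex hull of the singular points `α₁, …, α_n`. -/
theorem stieltjes_zeros_in_convex_hull
    (n : ℕ) (hn : 1 ≤ n) (α : Fin n → ℂ) (hα : Function.Injective α)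
    (ρ : Fin n → ℝ) (hρ : ∀ j, 0 < ρ j)
    (A B V : ℂ[X])
    (hA : A = ∏ j : Fin n, (X - C (α j)))
    (hB : B = ∑ j : Fin n, C (2 * (ρ j : ℂ)) * ∏ i ∈ Finset.univ.erase j, (X - C (α i)))
    (φ : ℂ[X]) (hφ : φ ≠ 0)
    (heq : A * derivative (derivative φ) + B * derivative φ = V * φ) :
    ∀ z : ℂ, φ.eval z = 0 → z ∈ convexHull ℝ (Set.range α) := by
  intro z hz
  by_contra hzK
  have : Nonempty (Fin n) := Fin.pos_iff_nonempty.mp hn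
  obtain ⟨f, c, hfK, hfz⟩ :=
    geometric_hahn_banach_closed_point (convex_convexHull ℝ _)
      ((Set.finite_range α).isCompact_convexHull ℝ).isClosed hzK
  have hzroot : z ∈ φ.roots.toFinset := by
    rw [Multiset.mem_toFinset, mem_roots hφ]; exact hz
  obtain ⟨y, hymem, hymax⟩ := φ.roots.toFinset.exists_max_image f ⟨z, hzroot⟩
  have hyroot : φ.eval y = 0 := (mem_roots hφ).mp (Multiset.mem_toFinset.mp hymem)
  have hcy : c < f y := hfz.trans_le (hymax z hzroot)
  have hfα : ∀ j, f (α j) < f y := fun j =>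
    (hfK _ (subset_convexHull ℝ _ (Set.mem_range_self j))).trans hcy
  have hyα : ∀ j, y - α j ≠ 0 := fun j h => absurd rfl
    ((sub_eq_zero.mp h ▸ (hfα j).ne') : f y ≠ f y)
  have hAy : eval (R := ℂ) y A ≠ 0 := by
    rw [hA, eval_prod]
    exact Finset.prod_ne_zero_iff.mpr fun j _ => by
      simpa using hyα j
  set m := rootMultiplicity y φ with hmdef
  set ψ := φ /ₘ (X - C y) ^ m with hψdef
  have hfact : (X - C y) ^ m * ψ = φ := pow_mul_divByMonic_rootMultiplicity_eq φ y
  have hψy : eval y ψ ≠ 0 := eval_divByMonic_pow_rootMultiplicity_ne_zero y hφ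
  have hm : 1 ≤ m := (rootMultiplicity_pos hφ).mpr hyroot
  have hm1 : m = 1 := by
    by_contra hm1
    obtain ⟨k, hk⟩ : ∃ k, m = k + 2 := ⟨m - 2, by omega⟩
    have e1 : derivative φ
        = (X - C y) ^ (k + 1) * (C ((k:ℂ) + 2) * ψ + (X - C y) * derivative ψ) := by
      rw [← hfact, hk, derivative_mul, derivative_pow, derivative_X_sub_C]
      push_cast
      ring
    have e2 : derivative (derivative φ) = (X - C y) ^ k *
        (C ((k:ℂ) + 1) * (C ((k:ℂ) + 2) * ψ + (X - C y) * derivative ψ)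
          + (X - C y) * ((C ((k:ℂ) + 2) + 1) * derivative ψ + (X - C y)
              * derivative (derivative ψ))) := by
      rw [e1]
      simp only [derivative_mul, derivative_pow, derivative_X_sub_C, derivative_add,
        derivative_C]
      push_cast
      ring
    have h0 : (X - C y) ^ k *
        (A * (C ((k:ℂ) + 1) * (C ((k:ℂ) + 2) * ψ + (X - C y) * derivative ψ)
            + (X - C y) * ((C ((k:ℂ) + 2) + 1) * derivative ψ
                + (X - C y) * derivative (derivative ψ)))
          + (X - C y) * (B * (C ((k:ℂ) + 2) * ψ + (X - C y) * derivative ψ))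
          - (X - C y) ^ 2 * (V * ψ)) = 0 := by
      have h := heq
      rw [e2, e1, ← hfact, hk] at h
      linear_combination h
    have hQ := (mul_eq_zero.mp h0).resolve_left (pow_ne_zero _ (X_sub_C_ne_zero y))
    have hev := congrArg (eval y) hQ
    simp only [eval_add, eval_sub, eval_mul, eval_pow, eval_X, eval_C, eval_one, eval_zero,
      sub_self, zero_mul, mul_zero, add_zero, zero_add] at hev
    norm_num at hev
    have hk1 : ((k:ℂ) + 1) ≠ 0 := by exact_mod_cast Nat.succ_ne_zero k
    have hk2 : ((k:ℂ) + 2) ≠ 0 := by exact_mod_cast Nat.succ_ne_zero (k+1)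
    rcases hev with h | h | h | h
    · exact hAy h
    · exact hk1 h
    · exact hk2 h
    · exact hψy h
  rw [hm1, pow_one] at hfact
  have e1 : derivative φ = ψ + (X - C y) * derivative ψ := by
    rw [← hfact, derivative_mul, derivative_X_sub_C]; ring
  have e2 : derivative (derivative φ)
      = 2 * derivative ψ + (X - C y) * derivative (derivative ψ) := by
    rw [e1]; simp only [derivative_add, derivative_mul, derivative_X_sub_C]; ring
  have hev := congrArg (eval y) heq
  rw [e2, e1] at hev
  simp only [eval_add, eval_mul, eval_sub, eval_X, eval_C, eval_ofNat, hyroot, mul_zero,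
    sub_self, zero_mul, zero_add, add_zero] at hev
  set S : ℂ := (ψ.roots.map (fun r => (y - r)⁻¹)).sum with hS
  have hlog : eval y (derivative ψ) = eval y ψ * S := logderiv_eval ψ y hψy
  set T : ℂ := ∑ j, (ρ j : ℂ) * (y - α j)⁻¹ with hT
  have hprod : ∀ j, (∏ i ∈ Finset.univ.erase j, (y - α i))
      = (∏ i, (y - α i)) * (y - α j)⁻¹ := by
    intro j
    rw [← Finset.mul_prod_erase Finset.univ _ (Finset.mem_univ j),
      mul_comm (y - α j), mul_assoc, mul_inv_cancel₀ (hyα j), mul_one]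
  have hAval : eval y A = ∏ i, (y - α i) := by
    rw [hA, eval_prod]; simp
  have hBy : eval y B = eval y A * (2 * T) := by
    rw [hB, eval_finset_sum, hT, Finset.mul_sum, Finset.mul_sum]
    refine Finset.sum_congr rfl fun j _ => ?_
    simp only [eval_mul, eval_C, eval_prod, eval_sub, eval_X]
    rw [hprod j, hAval]
    ring
  have hmain : S + T = 0 := by
    have h3 : (2 * eval y A * eval y ψ) * (S + T) = 0 := by
      rw [hlog, hBy] at hev
      linear_combination hev
    rcases mul_eq_zero.mp h3 with h | h
    · rcases mul_eq_zero.mp h with h | h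
      · rcases mul_eq_zero.mp h with h | h
        · norm_num at h
        · exact absurd h hAy
      · exact absurd h hψy
    · exact h
  have hdvd : ψ ∣ φ := ⟨X - C y, by rw [← hfact]; ring⟩
  have hroots_le : ψ.roots ≤ φ.roots := roots.le_of_dvd hφ hdvd
  have hSnon : 0 ≤ f ((starRingEnd ℂ) S) := by
    have hmap : f ((starRingEnd ℂ) S)
        = ((ψ.roots.map (fun r => f ((starRingEnd ℂ) (y - r)⁻¹)))).sum := by
      rw [hS, map_multiset_sum (starRingEnd ℂ), map_multiset_sum f,
        Multiset.map_map, Multiset.map_map]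
      rfl
    rw [hmap]
    apply Multiset.sum_nonneg
    intro x hx
    obtain ⟨r, hr, rfl⟩ := Multiset.mem_map.mp hx
    rw [f_conj_inv, show f (y - r) = f y - f r from map_sub f y r]
    have hry : f r ≤ f y := hymax r (Multiset.mem_toFinset.mpr (Multiset.mem_of_le hroots_le hr))
    exact mul_nonneg (inv_nonneg.mpr (Complex.normSq_nonneg _)) (sub_nonneg.mpr hry)
  have hTpos : 0 < f ((starRingEnd ℂ) T) := by
    rw [hT, map_sum (starRingEnd ℂ), map_sum f]
    apply Finset.sum_pos _ Finset.univ_nonempty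
    intro j _
    rw [show (starRingEnd ℂ) ((ρ j : ℂ) * (y - α j)⁻¹)
          = (ρ j : ℝ) • ((starRingEnd ℂ) ((y - α j)⁻¹)) by
        rw [map_mul, Complex.conj_ofReal, Complex.real_smul]]
    rw [map_smul, smul_eq_mul, f_conj_inv,
      show f (y - α j) = f y - f (α j) from map_sub f y (α j)]
    have h1 : 0 < Complex.normSq (y - α j) := Complex.normSq_pos.mpr (hyα j)
    have h2 : 0 < f y - f (α j) := sub_pos.mpr (hfα j)
    have h3 := hρ j
    positivity
  have hzero : f ((starRingEnd ℂ) S) + f ((starRingEnd ℂ) T) = 0 := by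
    rw [← map_add, ← map_add, hmain, map_zero, map_zero]
  linarith
end

section
/- Let α > 0 and ρ₁, ρ₂, ρ₃ > 0 be real, let k ≥ 1, and suppose the set V_k of real numbers ν for which the normalized Lamé equation A φ'' + B φ' = μ_k(x−ν)φ admits a real polynomial solution of degree exactly k has exactly k+1 elements. Then, with g₁ = −2(ρ₂+ρ₃−α(ρ₁+ρ₂)), the sum of the Van Vleck zeros of order k equals Σ_{ν ∈ V_k} ν = [ (k+1)k(k−1)(α−1)/3 + k(k+1) g₁ / 2 ] / ( k ( k − 1 + 2(ρ₁+ρ₂+ρ₃) ) ). -/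
open Polynomial

lemma vv_sum_j (n : ℕ) : ∑ j ∈ Finset.range n, (j : ℝ) = n * (n - 1) / 2 := by
  induction n with
  | zero => simp
  | succ m ih => rw [Finset.sum_range_succ, ih]; push_cast; ring

lemma vv_sum_jj (n : ℕ) :
    ∑ j ∈ Finset.range n, (j : ℝ) * ((j : ℝ) - 1) = n * (n - 1) * (n - 2) / 3 := by
  induction n with
  | zero => simp
  | succ m ih => rw [Finset.sum_range_succ, ih]; push_cast; ring

lemma vv_eval_charpoly {n : Type*} [DecidableEq n] [Fintype n]
    (M : Matrix n n ℝ) (t : ℝ) :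
    M.charpoly.eval t = (t • (1 : Matrix n n ℝ) - M).det := by
  rw [Matrix.charpoly, ← Polynomial.coe_evalRingHom, RingHom.map_det]
  congr 1
  ext i j
  by_cases h : i = j
  · subst h
    simp [Matrix.charmatrix_apply_eq, Matrix.one_apply]
  · simp [Matrix.charmatrix_apply_ne _ _ _ h, Matrix.one_apply_ne h, Matrix.sub_apply]

lemma vv_diag (α s g c μk : ℝ) (A B : ℝ[X])
    (hA' : A = X ^ 3 + C (1 - α) * X ^ 2 - C α * X)
    (hB : B = C s * X ^ 2 + C g * X - C c) :
    ∀ j : ℕ,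
      (A * derivative (derivative (X ^ j : ℝ[X])) + B * derivative (X ^ j : ℝ[X])
        - C μk * X * X ^ j).coeff j
        = (1 - α) * (j : ℝ) * ((j : ℝ) - 1) + g * (j : ℝ) := by
  intro j
  match j with
  | 0 => simp [coeff_C_mul, coeff_X]
  | 1 =>
    simp only [pow_one, derivative_X, derivative_one, mul_zero, zero_add, mul_one]
    rw [hB]
    simp only [coeff_add, coeff_sub, coeff_C_mul, coeff_X_pow, coeff_X, coeff_C]
    norm_num
  | (m + 2) =>
    have e1 : derivative (X ^ (m + 2) : ℝ[X]) = C ((m + 2 : ℕ) : ℝ) * X ^ (m + 1) := by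
      rw [derivative_X_pow]; norm_num
    have e2 : derivative (derivative (X ^ (m + 2) : ℝ[X]))
        = C ((m + 2 : ℕ) : ℝ) * (C ((m + 1 : ℕ) : ℝ) * X ^ m) := by
      rw [derivative_X_pow, derivative_C_mul, derivative_X_pow]; norm_num
    have cA : (A * (X : ℝ[X]) ^ m).coeff (m + 2) = 1 - α := by
      rw [coeff_mul_X_pow', if_pos (by omega : m ≤ m + 2)]
      have h2 : m + 2 - m = 2 := by omega
      rw [h2, hA']
      simp [coeff_X_pow, coeff_X, sub_mul, coeff_sub, coeff_one]
    have cB : (B * (X : ℝ[X]) ^ (m + 1)).coeff (m + 2) = g := by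
      rw [coeff_mul_X_pow', if_pos (by omega : m + 1 ≤ m + 2)]
      have h2 : m + 2 - (m + 1) = 1 := by omega
      rw [h2, hB]
      simp [coeff_X_pow, coeff_X, coeff_C]
    have cC : (C μk * (X : ℝ[X]) * X ^ (m + 2)).coeff (m + 2) = 0 := by
      have h3 : C μk * (X : ℝ[X]) * X ^ (m + 2) = C μk * X ^ (m + 3) := by ring
      rw [h3, coeff_C_mul, coeff_X_pow, if_neg (by omega)]; ring
    have e3 : A * derivative (derivative (X ^ (m + 2) : ℝ[X]))
          + B * derivative (X ^ (m + 2) : ℝ[X]) - C μk * X * X ^ (m + 2)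
        = C ((m + 2 : ℕ) : ℝ) * (C ((m + 1 : ℕ) : ℝ) * (A * X ^ m))
          + C ((m + 2 : ℕ) : ℝ) * (B * X ^ (m + 1)) - C μk * X * X ^ (m + 2) := by
      rw [e2, e1]; ring
    rw [e3]
    simp only [coeff_sub, coeff_add, coeff_C_mul, cA, cB]
    rw [cC]
    push_cast
    ring

/-- Exact formula (trace of the tridiagonal matrix) for the sum of the Van Vleck
zeros of order `k` for the normalized Lamé data. -/
theorem vanVleck_zero_sum_formula
    (α ρ₁ ρ₂ ρ₃ : ℝ) (hα : 0 < α)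
    (hρ₁ : 0 < ρ₁) (hρ₂ : 0 < ρ₂) (hρ₃ : 0 < ρ₃)
    (A B : ℝ[X])
    (hA : A = X * (X + 1) * (X - C α))
    (hB : B = C (2 * (ρ₁ + ρ₂ + ρ₃)) * X ^ 2
            + C (2 * (ρ₂ + ρ₃ - α * (ρ₁ + ρ₂))) * X
            - C (2 * α * ρ₂))
    (μ : ℕ → ℝ)
    (hμ : ∀ j : ℕ, μ j = (j : ℝ) * ((j : ℝ) - 1 + 2 * (ρ₁ + ρ₂ + ρ₃)))
    (k : ℕ) (hk : 1 ≤ k)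
    (V : Finset ℝ)
    (hV : ∀ v : ℝ, v ∈ V ↔
      ∃ φ : ℝ[X], φ.degree = (k : ℕ) ∧
        A * derivative (derivative φ) + B * derivative φ
          = C (μ k) * (X - C v) * φ)
    (hcard : V.card = k + 1)
    (g₁ : ℝ) (hg₁ : g₁ = -2 * (ρ₂ + ρ₃ - α * (ρ₁ + ρ₂))) :
    ∑ v ∈ V, v
      = (((k : ℝ) + 1) * (k : ℝ) * ((k : ℝ) - 1) * (α - 1) / 3
          + (k : ℝ) * ((k : ℝ) + 1) * g₁ / 2)
        / ((k : ℝ) * ((k : ℝ) - 1 + 2 * (ρ₁ + ρ₂ + ρ₃))) := by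
  have hk1 : (1 : ℝ) ≤ (k : ℝ) := by exact_mod_cast hk
  have hμk : μ k = (k : ℝ) * ((k : ℝ) - 1 + 2 * (ρ₁ + ρ₂ + ρ₃)) := hμ k
  have hμkpos : 0 < μ k := by
    rw [hμk]; apply mul_pos <;> linarith
  have hμkne : μ k ≠ 0 := ne_of_gt hμkpos
  set g : ℝ := 2 * (ρ₂ + ρ₃ - α * (ρ₁ + ρ₂)) with hg
  -- the operator polynomials and the matrix
  set T : ℕ → ℝ[X] := fun j =>
    A * derivative (derivative (X ^ j : ℝ[X])) + B * derivative (X ^ j : ℝ[X])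
      - C (μ k) * X * X ^ j with hT
  set N : Matrix (Fin (k + 1)) (Fin (k + 1)) ℝ :=
    Matrix.of (fun i j : Fin (k + 1) => (T (j : ℕ)).coeff (i : ℕ)) with hN
  have hA' : A = X ^ 3 + C (1 - α) * X ^ 2 - C α * X := by
    rw [hA]; simp only [C_sub, C_1]; ring
  have hdiag : ∀ j : ℕ,
      (T j).coeff j = (1 - α) * (j : ℝ) * ((j : ℝ) - 1) + g * (j : ℝ) := by
    intro j
    rw [hT]
    exact vv_diag α (2 * (ρ₁ + ρ₂ + ρ₃)) g (2 * α * ρ₂) (μ k) A B hA' hB j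
  -- each Van Vleck zero gives a root of the characteristic polynomial
  have hroot : ∀ v ∈ V, N.charpoly.IsRoot (-(μ k * v)) := by
    intro v hv
    obtain ⟨φ, hdeg, heq⟩ := (hV v).1 hv
    have hnd : φ.natDegree = k := natDegree_eq_of_degree_eq_some hdeg
    have hφne : φ ≠ 0 := by
      intro h; rw [h] at hdeg; simp at hdeg
    have hrep : φ = ∑ j ∈ Finset.range (k + 1), C (φ.coeff j) * X ^ j := by
      conv_lhs => rw [φ.as_sum_range_C_mul_X_pow]
      rw [hnd]
    have hmaster : ∑ j ∈ Finset.range (k + 1), C (φ.coeff j) * T j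
        = C (-(μ k * v)) * φ := by
      have hL : ∑ j ∈ Finset.range (k + 1), C (φ.coeff j) * T j
          = A * derivative (derivative φ) + B * derivative φ - C (μ k) * X * φ := by
        conv_rhs => rw [hrep]
        rw [derivative_sum]
        simp only [derivative_C_mul, derivative_sum]
        rw [Finset.mul_sum, Finset.mul_sum, Finset.mul_sum,
          ← Finset.sum_add_distrib, ← Finset.sum_sub_distrib]
        refine Finset.sum_congr rfl fun j _ => ?_
        rw [hT]; ring
      rw [hL, heq]
      simp only [map_neg, C_mul]
      ring
    have hcoeffs : ∀ i : ℕ,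
        ∑ j ∈ Finset.range (k + 1), φ.coeff j * (T j).coeff i
          = -(μ k * v) * φ.coeff i := by
      intro i
      calc ∑ j ∈ Finset.range (k + 1), φ.coeff j * (T j).coeff i
          = (∑ j ∈ Finset.range (k + 1), C (φ.coeff j) * T j).coeff i := by
            rw [finset_sum_coeff]
            exact Finset.sum_congr rfl fun j _ => (coeff_C_mul _).symm
        _ = (C (-(μ k * v)) * φ).coeff i := by rw [hmaster]
        _ = -(μ k * v) * φ.coeff i := coeff_C_mul _
    set c : Fin (k + 1) → ℝ := fun i => φ.coeff (i : ℕ) with hc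
    have hcne : c ≠ 0 := by
      intro h
      have h0 : φ.coeff k = 0 := congrFun h ⟨k, by omega⟩
      have hl := Polynomial.leadingCoeff_ne_zero.mpr hφne
      rw [Polynomial.leadingCoeff, hnd] at hl
      exact hl h0
    have hmul : N.mulVec c = (-(μ k * v)) • c := by
      funext i
      have h1 : N.mulVec c i
          = ∑ j ∈ Finset.range (k + 1), φ.coeff j * (T j).coeff (i : ℕ) := by
        rw [Matrix.mulVec, dotProduct,
          ← Fin.sum_univ_eq_sum_range (fun j => φ.coeff j * (T j).coeff (i : ℕ)) (k + 1)]
        exact Finset.sum_congr rfl fun j _ => by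
          simp [hN, hc, mul_comm]
      rw [h1, hcoeffs (i : ℕ)]
      simp [hc]
    have hdet : ((-(μ k * v)) • (1 : Matrix (Fin (k + 1)) (Fin (k + 1)) ℝ) - N).det = 0 := by
      rw [← Matrix.exists_mulVec_eq_zero_iff]
      refine ⟨c, hcne, ?_⟩
      rw [Matrix.sub_mulVec, Matrix.smul_mulVec, Matrix.one_mulVec, hmul, sub_self]
    rw [Polynomial.IsRoot, vv_eval_charpoly, hdet]
  -- the characteristic polynomial
  set p : ℝ[X] := N.charpoly with hp
  have hmonic : p.Monic := N.charpoly_monic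
  have hpdeg : p.natDegree = k + 1 := by
    rw [hp, Matrix.charpoly_natDegree_eq_dim, Fintype.card_fin]
  have hpne : p ≠ 0 := hmonic.ne_zero
  set W : Finset ℝ := V.image (fun v => -(μ k * v)) with hW
  have hinj : Function.Injective (fun v : ℝ => -(μ k * v)) := by
    intro a b h
    simp only [neg_inj] at h
    exact mul_left_cancel₀ hμkne h
  have hWcard : W.card = k + 1 := by
    rw [hW, Finset.card_image_of_injective _ hinj, hcard]
  have hWroots : W.val ≤ p.roots := by
    rw [Multiset.le_iff_count]
    intro a
    by_cases ha : a ∈ W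
    · rw [Multiset.count_eq_one_of_mem W.nodup ha]
      have hmem : a ∈ p.roots := by
        obtain ⟨v, hv, rfl⟩ := Finset.mem_image.mp ha
        exact Polynomial.mem_roots'.mpr ⟨hpne, hroot v hv⟩
      exact Multiset.one_le_count_iff_mem.mpr hmem
    · rw [Multiset.count_eq_zero_of_notMem ha]
      exact Nat.zero_le _
  have hrootseq : p.roots = W.val := by
    refine (Multiset.eq_of_le_of_card_le hWroots ?_).symm
    calc Multiset.card p.roots ≤ p.natDegree := p.card_roots'
      _ = k + 1 := hpdeg
      _ = Multiset.card W.val := by rw [← hWcard]; rfl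
  set q : ℝ[X] := ∏ w ∈ W, (X - C w) with hq
  have hq' : (p.roots.map fun a => X - C a).prod = q := by
    rw [hrootseq]; rfl
  have hqmonic : q.Monic := monic_prod_of_monic _ _ fun w _ => monic_X_sub_C w
  have hqdeg : q.natDegree = k + 1 := by
    rw [hq, natDegree_prod _ _ fun w _ => X_sub_C_ne_zero w]
    simp [natDegree_X_sub_C, hWcard]
  have hpq : p = q := by
    obtain ⟨r, hr⟩ := p.prod_multiset_X_sub_C_dvd
    rw [hq'] at hr
    have hrne : r ≠ 0 := by
      intro h; rw [h, mul_zero] at hr; exact hpne hr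
    have hrdeg : r.natDegree = 0 := by
      have h2 : p.natDegree = q.natDegree + r.natDegree := by
        rw [hr, natDegree_mul hqmonic.ne_zero hrne]
      omega
    have hrC : r = C (r.coeff 0) := eq_C_of_natDegree_eq_zero hrdeg
    have hlead : r.coeff 0 = 1 := by
      have h3 : q.leadingCoeff * r.leadingCoeff = 1 := by
        rw [← leadingCoeff_mul, ← hr]; exact hmonic
      rw [hqmonic.leadingCoeff, one_mul] at h3
      rw [← h3, Polynomial.leadingCoeff, hrdeg]
    rw [hr, hrC, hlead, map_one, mul_one]
  -- trace identities
  have htraceW : N.trace = ∑ w ∈ W, w := by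
    have h1 := Matrix.trace_eq_neg_charpoly_coeff N
    rw [Fintype.card_fin] at h1
    have h2 : p.coeff (k + 1 - 1) = p.nextCoeff := by
      rw [Polynomial.nextCoeff_of_natDegree_pos (by omega), hpdeg]
    have h3 : q.nextCoeff = -∑ w ∈ W, w := by
      simpa using Polynomial.prod_X_sub_C_nextCoeff (s := W) (f := id)
    rw [h1, ← hp, h2, hpq, h3, neg_neg]
  have htraceV : N.trace = -(μ k * ∑ v ∈ V, v) := by
    rw [htraceW, hW, Finset.sum_image (fun x _ y _ h => hinj h),
      Finset.mul_sum, ← Finset.sum_neg_distrib]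
  -- trace computed from the diagonal
  have htraced : N.trace
      = (1 - α) * ((k + 1 : ℝ) * k * ((k : ℝ) - 1) / 3) + g * ((k + 1 : ℝ) * k / 2) := by
    have h1 : N.trace = ∑ j ∈ Finset.range (k + 1), (T j).coeff j := by
      rw [Matrix.trace]
      rw [← Fin.sum_univ_eq_sum_range (fun j => (T j).coeff j) (k + 1)]
      rfl
    rw [h1]
    have h2 : ∀ j ∈ Finset.range (k + 1),
        (T j).coeff j = (1 - α) * ((j : ℝ) * ((j : ℝ) - 1)) + g * (j : ℝ) := by
      intro j _; rw [hdiag j]; ring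
    rw [Finset.sum_congr rfl h2, Finset.sum_add_distrib, ← Finset.mul_sum, ← Finset.mul_sum,
      vv_sum_jj, vv_sum_j]
    push_cast
    ring
  -- conclude
  have hfinal : μ k * ∑ v ∈ V, v
      = ((k : ℝ) + 1) * (k : ℝ) * ((k : ℝ) - 1) * (α - 1) / 3
        + (k : ℝ) * ((k : ℝ) + 1) * g₁ / 2 := by
    have h4 := htraceV.symm.trans htraced
    have hgg : g₁ = -g := by rw [hg₁, hg]; ring
    rw [hgg]
    push_cast at h4
    linarith
  rw [← hμk, eq_div_iff hμkne]
  linarith [hfinal]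
end

section
/- Fix real numbers α₁ < α₂ < α₃ and positive reals ρ₁, ρ₂, ρ₃, suppose that for every positive integer k the set V_k of Van Vleck zeros of order k has exactly k+1 elements, and write σ_k = Σ_{ν ∈ V_k} ν. Then the differences of consecutive sums converge: lim_{k→∞} ( σ_k − σ_{k−1} ) = (α₁ + α₂ + α₃)/3. -/
open Polynomial Filter

noncomputable def Lmap (A B : ℝ[X]) (μk : ℝ) : ℝ[X] →ₗ[ℝ] ℝ[X] where
  toFun φ := C μk * (X * φ) - (A * derivative (derivative φ) + B * derivative φ)
  map_add' φ ψ := by simp; ring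
  map_smul' r φ := by simp [smul_sub, smul_add, mul_smul_comm]

theorem Lmap_coeff (e1 e2 e3 b2 b1 b0 μk : ℝ) (A B : ℝ[X])
    (hA : A = X^3 - C e1 * X^2 + C e2 * X - C e3)
    (hB : B = C b2 * X^2 + C b1 * X + C b0) (φ : ℝ[X]) (m : ℕ) :
    (Lmap A B μk φ).coeff m =
      μk * (if 1 ≤ m then φ.coeff (m-1) else 0)
      - ((if 3 ≤ m then (derivative (derivative φ)).coeff (m-3) else 0)
         - e1 * (if 2 ≤ m then (derivative (derivative φ)).coeff (m-2) else 0)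
         + e2 * (if 1 ≤ m then (derivative (derivative φ)).coeff (m-1) else 0)
         - e3 * (derivative (derivative φ)).coeff m
         + b2 * (if 2 ≤ m then (derivative φ).coeff (m-2) else 0)
         + b1 * (if 1 ≤ m then (derivative φ).coeff (m-1) else 0)
         + b0 * (derivative φ).coeff m) := by
  have h : Lmap A B μk φ = C μk * (φ * X^1)
      - ((derivative (derivative φ)) * X^3 - C e1 * ((derivative (derivative φ)) * X^2)
        + C e2 * ((derivative (derivative φ)) * X^1) - C e3 * (derivative (derivative φ))
        + C b2 * ((derivative φ) * X^2) + C b1 * ((derivative φ) * X^1)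
        + C b0 * (derivative φ)) := by
    simp only [Lmap, LinearMap.coe_mk, AddHom.coe_mk, hA, hB]; ring
  rw [h]
  simp only [coeff_sub, coeff_add, coeff_C_mul, coeff_mul_X_pow']

theorem Lmap_inv (e1 e2 e3 b2 b1 b0 : ℝ) (A B : ℝ[X])
    (hA : A = X^3 - C e1 * X^2 + C e2 * X - C e3)
    (hB : B = C b2 * X^2 + C b1 * X + C b0)
    (k : ℕ) (hk : 1 ≤ k) (μk : ℝ) (hμk : μk = k * ((k:ℝ) - 1 + b2))
    (φ : ℝ[X]) (hφ : ∀ i : ℕ, k + 1 ≤ i → φ.coeff i = 0)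
    (m : ℕ) (hm : k + 1 ≤ m) : (Lmap A B μk φ).coeff m = 0 := by
  rw [Lmap_coeff e1 e2 e3 b2 b1 b0 μk A B hA hB]
  have h1 : (1:ℕ) ≤ m := by omega
  have h2 : (2:ℕ) ≤ m := by omega
  simp only [if_pos h1, if_pos h2, coeff_derivative]
  rw [show m - 2 + 1 + 1 = m from by omega, show m - 1 + 1 + 1 = m + 1 from by omega,
    show m - 1 + 1 = m from by omega, show m - 2 + 1 = m - 1 from by omega,
    hφ m (by omega), hφ (m+1) (by omega), hφ (m+1+1) (by omega)]
  rcases Nat.lt_or_ge m (k+2) with hm2 | hm2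
  · -- m = k + 1
    have hmk : m = k + 1 := by omega
    subst hmk
    rw [show k + 1 - 1 = k from by omega]
    rcases Nat.lt_or_ge k 2 with hk2 | hk2
    · have : k = 1 := by omega
      subst this
      norm_num [hμk]
    · have h3 : (3:ℕ) ≤ k + 1 := by omega
      rw [if_pos h3, show k + 1 - 3 + 1 + 1 = k from by omega, hμk]
      push_cast [Nat.cast_sub (show (1:ℕ) ≤ k by omega),
        Nat.cast_sub (show (3:ℕ) ≤ k + 1 by omega),
        Nat.cast_sub (show (2:ℕ) ≤ k + 1 by omega),
        Nat.cast_sub (show (2:ℕ) ≤ k by omega)]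
      ring
  · rw [hφ (m-1) (by omega)]
    split
    · rw [show m - 3 + 1 + 1 = m - 1 from by omega, hφ (m-1) (by omega)]; ring
    · ring

theorem Lmap_diag (e1 e2 e3 b2 b1 b0 μk : ℝ) (A B : ℝ[X])
    (hA : A = X^3 - C e1 * X^2 + C e2 * X - C e3)
    (hB : B = C b2 * X^2 + C b1 * X + C b0) (j : ℕ) :
    (Lmap A B μk (X^j : ℝ[X])).coeff j = e1 * (j:ℝ) * ((j:ℝ)-1) - b1 * (j:ℝ) := by
  rw [Lmap_coeff e1 e2 e3 b2 b1 b0 μk A B hA hB]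
  match j with
  | 0 => simp
  | 1 => simp [coeff_one]
  | 2 => simp [coeff_derivative, coeff_one]; ring
  | (n+3) =>
    rw [if_pos (by omega : 1 ≤ n+3), if_pos (by omega : 2 ≤ n+3), if_pos (by omega : 3 ≤ n+3)]
    simp only [coeff_derivative, coeff_X_pow]
    rw [show n+3-3+1+1 = n+2 from by omega, show n+3-2+1+1 = n+3 from by omega,
      show n+3-1+1+1 = n+4 from by omega, show n+3-2+1 = n+2 from by omega,
      show n+3-1+1 = n+3 from by omega, show n+3-1 = n+2 from by omega,
      show n+3-2 = n+1 from by omega, show n+3-3 = n from by omega]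
    norm_num
    ring

theorem key_trace (e1 e2 e3 b2 b1 b0 : ℝ) (A B : ℝ[X])
    (hA : A = X^3 - C e1 * X^2 + C e2 * X - C e3)
    (hB : B = C b2 * X^2 + C b1 * X + C b0)
    (k : ℕ) (hk : 1 ≤ k) (μk : ℝ) (hμk : μk = k * ((k:ℝ) - 1 + b2)) (hμne : μk ≠ 0)
    (V : Finset ℝ) (hVcard : V.card = k + 1)
    (hmem : ∀ v ∈ V, ∃ φ : ℝ[X], φ.degree = (k:ℕ) ∧
      A * derivative (derivative φ) + B * derivative φ = C μk * (X - C v) * φ) :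
    μk * ∑ v ∈ V, v = ∑ j ∈ Finset.range (k+1), (e1 * (j:ℝ) * ((j:ℝ)-1) - b1 * (j:ℝ)) := by
  classical
  set W := Polynomial.degreeLT ℝ (k+1) with hW
  have hWinv : ∀ φ ∈ W, Lmap A B μk φ ∈ W := by
    intro φ hφ
    rw [hW, mem_degreeLT, degree_lt_iff_coeff_zero] at hφ ⊢
    intro m hm
    exact Lmap_inv e1 e2 e3 b2 b1 b0 A B hA hB k hk μk hμk φ
      (fun i hi => hφ i (by exact_mod_cast hi)) m (by exact_mod_cast hm)
  haveI : Module.Finite ℝ W := Module.Finite.equiv (degreeLTEquiv ℝ (k+1)).symm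
  have hfr : Module.finrank ℝ W = k + 1 := by
    rw [(degreeLTEquiv ℝ (k+1)).finrank_eq]; simp
  set L' : W →ₗ[ℝ] W := (Lmap A B μk).restrict hWinv with hL'
  -- the monomial basis
  set mb : Module.Basis (Fin (k+1)) ℝ W :=
    (Pi.basisFun ℝ (Fin (k+1))).map (degreeLTEquiv ℝ (k+1)).symm with hmb
  have hrepr : ∀ (x : W) (i : Fin (k+1)), mb.repr x i = (x : ℝ[X]).coeff i := by
    intro x i
    simp [hmb, Module.Basis.map_repr, degreeLTEquiv]
  have hmbj : ∀ j : Fin (k+1), ((mb j : W) : ℝ[X]) = X ^ (j:ℕ) := by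
    intro j
    have hXmem : (X ^ (j:ℕ) : ℝ[X]) ∈ W := by
      rw [hW, mem_degreeLT, degree_X_pow]
      exact_mod_cast j.isLt
    have : mb j = ⟨X ^ (j:ℕ), hXmem⟩ := by
      apply (degreeLTEquiv ℝ (k+1)).injective
      rw [hmb, Module.Basis.map_apply, LinearEquiv.apply_symm_apply]
      funext i
      simp [degreeLTEquiv, coeff_X_pow, Pi.basisFun_apply, Pi.single_apply, Fin.ext_iff,
        eq_comm]
    rw [this]
  -- eigenvectors
  set ι := {x // x ∈ V} with hι
  have hne : Nonempty ι := by
    have : 0 < V.card := by omega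
    exact Finset.Nonempty.coe_sort (Finset.card_pos.mp this)
  choose φf hdeg heq using fun i : ι => hmem i.1 i.2
  have hφmem : ∀ i : ι, φf i ∈ W := by
    intro i
    rw [hW, mem_degreeLT, hdeg i]
    exact_mod_cast Nat.lt_succ_self k
  set ev : ι → W := fun i => ⟨φf i, hφmem i⟩ with hev'
  have hev : ∀ i : ι, Module.End.HasEigenvector L' (μk * i.1) (ev i) := by
    intro i
    constructor
    · rw [Module.End.mem_eigenspace_iff]
      apply Subtype.ext
      have : Lmap A B μk (φf i) = (μk * i.1) • (φf i) := by
        simp only [Lmap, LinearMap.coe_mk, AddHom.coe_mk, heq i, smul_eq_C_mul, C_mul]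
        ring
      simpa [hL', LinearMap.restrict_apply, hev'] using this
    · intro h0
      have h1 : φf i = 0 := by simpa [hev', Submodule.mk_eq_zero] using h0
      have hd := hdeg i
      rw [h1, degree_zero] at hd
      simp at hd
  have hinj : Function.Injective (fun i : ι => μk * i.1) := by
    intro i j hij
    exact Subtype.ext (mul_left_cancel₀ hμne hij)
  have li : LinearIndependent ℝ ev :=
    Module.End.eigenvectors_linearIndependent' L' (fun i : ι => μk * i.1) hinj ev hev
  have hcardeq : Fintype.card ι = Module.finrank ℝ W := by
    rw [Fintype.card_coe, hVcard, hfr]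
  set eb : Module.Basis ι ℝ W := basisOfLinearIndependentOfCardEqFinrank li hcardeq with heb'
  have heb : ∀ i, eb i = ev i := fun i => by
    rw [heb', coe_basisOfLinearIndependentOfCardEqFinrank]
  have t1 : LinearMap.trace ℝ W L' = ∑ i : ι, (μk * i.1) := by
    rw [LinearMap.trace_eq_matrix_trace ℝ eb, Matrix.trace]
    apply Finset.sum_congr rfl
    intro i _
    rw [Matrix.diag_apply, LinearMap.toMatrix_apply]
    have : L' (eb i) = (μk * i.1) • eb i := by
      rw [heb i]; exact Module.End.mem_eigenspace_iff.mp (hev i).1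
    rw [this, map_smul]
    simp
  have t2 : LinearMap.trace ℝ W L' =
      ∑ j ∈ Finset.range (k+1), (e1 * (j:ℝ) * ((j:ℝ)-1) - b1 * (j:ℝ)) := by
    rw [LinearMap.trace_eq_matrix_trace ℝ mb, Matrix.trace, ← Fin.sum_univ_eq_sum_range]
    apply Finset.sum_congr rfl
    intro j _
    rw [Matrix.diag_apply, LinearMap.toMatrix_apply, hrepr]
    have : (L' (mb j) : ℝ[X]) = Lmap A B μk (X ^ (j:ℕ)) := by
      rw [hL', LinearMap.restrict_coe_apply, hmbj j]
    rw [this]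
    exact Lmap_diag e1 e2 e3 b2 b1 b0 μk A B hA hB j
  rw [← t2, t1, Finset.mul_sum, ← Finset.sum_coe_sort V (fun v => μk * v)]

theorem sum_closed (a b : ℝ) (n : ℕ) :
    ∑ j ∈ Finset.range n, (a*(j:ℝ)*((j:ℝ)-1) - b*(j:ℝ))
      = a*(n:ℝ)*((n:ℝ)-1)*((n:ℝ)-2)/3 - b*(n:ℝ)*((n:ℝ)-1)/2 := by
  induction n with
  | zero => simp
  | succ m ih => rw [Finset.sum_range_succ, ih]; push_cast; ring

theorem limit_glue (e1 b2 c0 D : ℝ) (_hb2 : 0 < b2) (σ : ℕ → ℝ)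
    (hσ : ∀ k : ℕ, 1 ≤ k → σ k = e1/3*((k:ℝ)-1+b2) + c0 + D/((k:ℝ)-1+b2)) :
    Tendsto (fun k : ℕ => σ (k+1) - σ k) atTop (nhds (e1/3)) := by
  have l0 : Tendsto (fun k : ℕ => (k:ℝ)) atTop atTop := tendsto_natCast_atTop_atTop
  have l1 : Tendsto (fun k : ℕ => D/((k:ℝ)+b2)) atTop (nhds 0) :=
    tendsto_const_nhds.div_atTop (tendsto_atTop_add_const_right atTop b2 l0)
  have l2' : Tendsto (fun k : ℕ => (k:ℝ)-1+b2) atTop atTop := by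
    have := tendsto_atTop_add_const_right atTop (-1+b2) l0
    simpa [sub_eq_add_neg, add_assoc] using this
  have l2 : Tendsto (fun k : ℕ => D/((k:ℝ)-1+b2)) atTop (nhds 0) :=
    tendsto_const_nhds.div_atTop l2'
  have lg : Tendsto (fun k : ℕ => e1/3 + (D/((k:ℝ)+b2) - D/((k:ℝ)-1+b2))) atTop
      (nhds (e1/3)) := by
    have := tendsto_const_nhds (x := e1/3) (f := atTop (α := ℕ)) |>.add (l1.sub l2)
    simpa using this
  apply lg.congr'
  filter_upwards [eventually_ge_atTop 1] with k hk
  rw [hσ k hk, hσ (k+1) (by omega)]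
  push_cast
  ring

/-- The differences of consecutive sums of Van Vleck zeros converge to
`(α₁ + α₂ + α₃)/3`. -/
theorem vanVleck_sum_differences_tendsto
    (α₁ α₂ α₃ ρ₁ ρ₂ ρ₃ : ℝ)
    (h12 : α₁ < α₂) (h23 : α₂ < α₃)
    (hρ₁ : 0 < ρ₁) (hρ₂ : 0 < ρ₂) (hρ₃ : 0 < ρ₃)
    (A B : ℝ[X])
    (hA : A = (X - C α₁) * (X - C α₂) * (X - C α₃))
    (hB : B = C (2 * ρ₁) * ((X - C α₂) * (X - C α₃))
            + C (2 * ρ₂) * ((X - C α₁) * (X - C α₃))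
            + C (2 * ρ₃) * ((X - C α₁) * (X - C α₂)))
    (μ : ℕ → ℝ)
    (hμ : ∀ j : ℕ, μ j = (j : ℝ) * ((j : ℝ) - 1 + 2 * (ρ₁ + ρ₂ + ρ₃)))
    (V : ℕ → Finset ℝ)
    (hV : ∀ k : ℕ, 1 ≤ k → ∀ v : ℝ, v ∈ V k ↔
      ∃ φ : ℝ[X], φ.degree = (k : ℕ) ∧
        A * derivative (derivative φ) + B * derivative φ
          = C (μ k) * (X - C v) * φ)
    (hcard : ∀ k : ℕ, 1 ≤ k → (V k).card = k + 1)
    (σ : ℕ → ℝ) (hσ : ∀ k : ℕ, σ k = ∑ v ∈ V k, v) :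
    Tendsto (fun k : ℕ => σ (k + 1) - σ k) atTop
      (nhds ((α₁ + α₂ + α₃) / 3)) := by
  set e1 := α₁ + α₂ + α₃ with he1
  set b2 := 2*ρ₁ + 2*ρ₂ + 2*ρ₃ with hb2d
  set b1 := -(2*ρ₁*(α₂+α₃) + 2*ρ₂*(α₁+α₃) + 2*ρ₃*(α₁+α₂)) with hb1d
  have hA' : A = X^3 - C e1 * X^2 + C (α₁*α₂+α₁*α₃+α₂*α₃) * X - C (α₁*α₂*α₃) := by
    rw [hA, he1]; simp only [C_add, C_mul]; ring
  have hB' : B = C b2 * X^2 + C b1 * X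
      + C (2*ρ₁*(α₂*α₃) + 2*ρ₂*(α₁*α₃) + 2*ρ₃*(α₁*α₂)) := by
    rw [hB, hb2d, hb1d]; simp only [C_add, C_mul, C_neg]; ring
  have hb2pos : 0 < b2 := by rw [hb2d]; positivity
  have hμform : ∀ k : ℕ, μ k = (k:ℝ) * ((k:ℝ) - 1 + b2) := by
    intro k; rw [hμ, hb2d]; ring
  have hμpos : ∀ k : ℕ, 1 ≤ k → 0 < μ k := by
    intro k hk
    rw [hμform]
    have h1 : (1:ℝ) ≤ (k:ℝ) := by exact_mod_cast hk
    nlinarith [hb2pos]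
  have hkey : ∀ k : ℕ, 1 ≤ k → μ k * σ k
      = e1*((k:ℝ)+1)*(k:ℝ)*((k:ℝ)-1)/3 - b1*((k:ℝ)+1)*(k:ℝ)/2 := by
    intro k hk
    have h := key_trace e1 (α₁*α₂+α₁*α₃+α₂*α₃) (α₁*α₂*α₃) b2 b1
      (2*ρ₁*(α₂*α₃) + 2*ρ₂*(α₁*α₃) + 2*ρ₃*(α₁*α₂)) A B hA' hB' k hk (μ k)
      (hμform k) (ne_of_gt (hμpos k hk)) (V k) (hcard k hk)
      (fun v hv => (hV k hk v).mp hv)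
    rw [hσ k, h, sum_closed]
    push_cast
    ring
  set c0 := e1*(2-2*b2)/3 - b1/2 with hc0
  set D := e1*(b2^2-2*b2)/3 - b1*(2-b2)/2 with hD
  have hform : ∀ k : ℕ, 1 ≤ k → σ k = e1/3*((k:ℝ)-1+b2) + c0 + D/((k:ℝ)-1+b2) := by
    intro k hk
    have h1 : (1:ℝ) ≤ (k:ℝ) := by exact_mod_cast hk
    have hu : (0:ℝ) < (k:ℝ)-1+b2 := by linarith
    have hk0 : (0:ℝ) < (k:ℝ) := by linarith
    have hne : (k:ℝ)*((k:ℝ)-1+b2) ≠ 0 := by positivity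
    apply mul_left_cancel₀ hne
    have h := hkey k hk
    rw [hμform] at h
    rw [h, hc0, hD]
    field_simp
    ring
  exact limit_glue e1 b2 c0 D hb2pos σ hform
end

section
/- Fix real numbers α₁ < α₂ < α₃ and positive reals ρ₁, ρ₂, ρ₃. Let ν, μ, μ̃ ∈ ℝ with μ̃ > μ, let S be a nonzero real polynomial with A S'' + B S' = μ(x−ν)S identically, and let T be a real polynomial with A T'' + B T' = μ̃(x−ν)T identically. Suppose x₁ < x₂ are real numbers with S(x₁) = S(x₂) = 0 and S(x) ≠ 0 for all x ∈ (x₁, x₂), that the closed interval [x₁, x₂] contains none of α₁, α₂, α₃, and that (x−ν)/A(x) < 0 for all x ∈ (x₁, x₂). Then T has a zero in the open interval (x₁, x₂). -/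
open Polynomial Set Filter Topology

lemma sign_const_aux (f : ℝ → ℝ) (a b : ℝ) (hf : Continuous f)
    (hne : ∀ x ∈ Set.Ioo a b, f x ≠ 0) :
    (∀ x ∈ Set.Ioo a b, 0 < f x) ∨ (∀ x ∈ Set.Ioo a b, f x < 0) := by
  by_contra h
  push_neg at h
  obtain ⟨⟨u, hu, hu0⟩, ⟨v, hv, hv0⟩⟩ := h
  have hu' : f u < 0 := lt_of_le_of_ne hu0 (hne u hu)
  have hv' : 0 < f v := lt_of_le_of_ne hv0 (Ne.symm (hne v hv))
  rcases lt_or_gt_of_ne (fun h : u = v => by rw [h] at hu'; linarith) with hlt | hlt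
  · have := intermediate_value_Icc hlt.le hf.continuousOn
      (show (0:ℝ) ∈ Set.Icc (f u) (f v) from ⟨hu'.le, hv'.le⟩)
    obtain ⟨c, hc, hc0⟩ := this
    exact hne c ⟨lt_of_lt_of_le hu.1 hc.1, lt_of_le_of_lt hc.2 hv.2⟩ hc0
  · have := intermediate_value_Icc' hlt.le hf.continuousOn
      (show (0:ℝ) ∈ Set.Icc (f u) (f v) from ⟨hu'.le, hv'.le⟩)
    obtain ⟨c, hc, hc0⟩ := this
    exact hne c ⟨lt_of_lt_of_le hv.1 hc.1, lt_of_le_of_lt hc.2 hu.2⟩ hc0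

lemma deriv_nonneg_aux (f : ℝ → ℝ) (f' a b : ℝ) (hab : a < b)
    (hd : HasDerivAt f f' a) (h0 : f a = 0)
    (hpos : ∀ x ∈ Set.Ioo a b, 0 < f x) : 0 ≤ f' := by
  have ht : Tendsto (slope f a) (𝓝[>] a) (𝓝 f') :=
    (hasDerivAt_iff_tendsto_slope.1 hd).mono_left
      (nhdsWithin_mono _ (fun x hx => ne_of_gt hx))
  refine ge_of_tendsto ht ?_
  filter_upwards [Ioo_mem_nhdsGT_of_mem (Set.left_mem_Ico.2 hab)] with x hx
  have h1 : 0 < f x := hpos x hx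
  have hxa : 0 < x - a := by linarith [hx.1]
  have : slope f a x = f x / (x - a) := by
    rw [slope_def_field, h0, sub_zero]
  rw [this]
  positivity

lemma deriv_nonpos_aux (f : ℝ → ℝ) (f' a b : ℝ) (hab : a < b)
    (hd : HasDerivAt f f' b) (h0 : f b = 0)
    (hpos : ∀ x ∈ Set.Ioo a b, 0 < f x) : f' ≤ 0 := by
  have ht : Tendsto (slope f b) (𝓝[<] b) (𝓝 f') :=
    (hasDerivAt_iff_tendsto_slope.1 hd).mono_left
      (nhdsWithin_mono _ (fun x hx => ne_of_lt hx))
  refine le_of_tendsto ht ?_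
  filter_upwards [Ioo_mem_nhdsLT_of_mem (Set.right_mem_Ioc.2 hab)] with x hx
  have h1 : 0 < f x := hpos x hx
  have hxb : x - b < 0 := by linarith [hx.2]
  have : slope f b x = f x / (x - b) := by
    rw [slope_def_field, h0, sub_zero]
  rw [this]
  exact le_of_lt (div_neg_of_pos_of_neg h1 hxb)

lemma limit_nonneg_left (f : ℝ → ℝ) (a b : ℝ) (hab : a < b) (hf : Continuous f)
    (hpos : ∀ x ∈ Set.Ioo a b, 0 < f x) : 0 ≤ f b := by
  have ht : Tendsto f (𝓝[<] b) (𝓝 (f b)) :=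
    (hf.tendsto b).mono_left nhdsWithin_le_nhds
  refine ge_of_tendsto ht ?_
  filter_upwards [Ioo_mem_nhdsLT_of_mem (Set.right_mem_Ioc.2 hab)] with x hx
  exact (hpos x hx).le

lemma limit_nonneg_right (f : ℝ → ℝ) (a b : ℝ) (hab : a < b) (hf : Continuous f)
    (hpos : ∀ x ∈ Set.Ioo a b, 0 < f x) : 0 ≤ f a := by
  have ht : Tendsto f (𝓝[>] a) (𝓝 (f a)) :=
    (hf.tendsto a).mono_left nhdsWithin_le_nhds
  refine ge_of_tendsto ht ?_
  filter_upwards [Ioo_mem_nhdsGT_of_mem (Set.left_mem_Ico.2 hab)] with x hx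
  exact (hpos x hx).le

/-- Core of the Sturm comparison argument, with all sign choices normalized. -/
lemma sturm_core (A B : ℝ[X]) (ν μ μ' : ℝ) (hμμ' : μ < μ') (S T : ℝ[X])
    (hS : A * derivative (derivative S) + B * derivative S = C μ * (X - C ν) * S)
    (hT : A * derivative (derivative T) + B * derivative T = C μ' * (X - C ν) * T)
    (x₁ x₂ : ℝ) (hx : x₁ < x₂)
    (hS₁ : S.eval x₁ = 0) (hS₂ : S.eval x₂ = 0)
    (hAne : ∀ x ∈ Set.Icc x₁ x₂, A.eval x ≠ 0)
    (hQ : ∀ x ∈ Set.Ioo x₁ x₂, (x - ν) / A.eval x < 0)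
    (hSpos : ∀ x ∈ Set.Ioo x₁ x₂, 0 < S.eval x)
    (hTpos : ∀ x ∈ Set.Ioo x₁ x₂, 0 < T.eval x) : False := by
  set W : ℝ[X] := derivative S * T - S * derivative T with hW
  have key : A * derivative W + B * W = (C μ - C μ') * (X - C ν) * (S * T) := by
    simp only [hW, derivative_sub, derivative_mul]
    linear_combination T * hS - S * hT
  -- clamp to the interval
  set c : ℝ → ℝ := fun t => max x₁ (min t x₂) with hc
  have hc_mem : ∀ t, c t ∈ Set.Icc x₁ x₂ := fun t =>
    ⟨le_max_left _ _, max_le hx.le (min_le_right _ _)⟩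
  have hc_cont : Continuous c := continuous_const.max (continuous_id.min continuous_const)
  have hc_eq : ∀ x ∈ Set.Icc x₁ x₂, c x = x := fun x hxm => by
    simp only [hc]
    rw [min_eq_left hxm.2, max_eq_right hxm.1]
  set g : ℝ → ℝ := fun t => B.eval (c t) / A.eval (c t) with hg
  have hg_cont : Continuous g :=
    (B.continuous.comp hc_cont).div (A.continuous.comp hc_cont)
      (fun t => hAne _ (hc_mem t))
  set h : ℝ → ℝ := fun u => ∫ t in x₁..u, g t with hh
  have hhd : ∀ x, HasDerivAt h (g x) x := fun x =>
    (hg_cont.integral_hasStrictDerivAt x₁ x).hasDerivAt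
  set F : ℝ → ℝ := fun x => Real.exp (h x) * W.eval x with hF
  have hFd : ∀ x, HasDerivAt F
      (Real.exp (h x) * (g x * W.eval x + (derivative W).eval x)) x := by
    intro x
    have h1 : HasDerivAt (fun y => Real.exp (h y)) (Real.exp (h x) * g x) x :=
      (hhd x).exp
    have h2 : HasDerivAt (fun y => W.eval y) ((derivative W).eval x) x := W.hasDerivAt x
    have : HasDerivAt F (Real.exp (h x) * g x * W.eval x + Real.exp (h x) * (derivative W).eval x) x :=
      h1.mul h2
    convert this using 1
    ring
  have hFc : Continuous F := continuous_iff_continuousAt.2 fun x => (hFd x).continuousAt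
  have hmono : StrictMonoOn F (Set.Icc x₁ x₂) := by
    apply strictMonoOn_of_deriv_pos (convex_Icc x₁ x₂) hFc.continuousOn
    intro x hxm
    rw [interior_Icc] at hxm
    rw [(hFd x).deriv]
    have hxIcc : x ∈ Set.Icc x₁ x₂ := Set.Ioo_subset_Icc_self hxm
    have hA0 : A.eval x ≠ 0 := hAne x hxIcc
    have hk := congrArg (eval x) key
    simp only [eval_add, eval_mul, eval_sub, eval_C, eval_X] at hk
    have hgx : g x = B.eval x / A.eval x := by
      simp only [hg]; rw [hc_eq x hxIcc]
    have e1 : g x * W.eval x + (derivative W).eval x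
        = (μ - μ') * ((x - ν) / A.eval x) * (S.eval x * T.eval x) := by
      rw [hgx]
      field_simp
      linear_combination hk
    rw [e1]
    have hq := hQ x hxm
    have hs := hSpos x hxm
    have ht := hTpos x hxm
    have hmm : μ - μ' < 0 := by linarith
    have : 0 < (μ - μ') * ((x - ν) / A.eval x) := mul_pos_of_neg_of_neg hmm hq
    have : 0 < (μ - μ') * ((x - ν) / A.eval x) * (S.eval x * T.eval x) :=
      mul_pos this (mul_pos hs ht)
    positivity
  -- endpoint signs
  have dS1 : 0 ≤ (derivative S).eval x₁ :=
    deriv_nonneg_aux (fun y => S.eval y) _ x₁ x₂ hx (S.hasDerivAt x₁) hS₁ hSpos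
  have dS2 : (derivative S).eval x₂ ≤ 0 :=
    deriv_nonpos_aux (fun y => S.eval y) _ x₁ x₂ hx (S.hasDerivAt x₂) hS₂ hSpos
  have tT1 : 0 ≤ T.eval x₁ :=
    limit_nonneg_right (fun y => T.eval y) x₁ x₂ hx T.continuous hTpos
  have tT2 : 0 ≤ T.eval x₂ :=
    limit_nonneg_left (fun y => T.eval y) x₁ x₂ hx T.continuous hTpos
  have hW1 : W.eval x₁ = (derivative S).eval x₁ * T.eval x₁ := by
    simp [hW, hS₁]
  have hW2 : W.eval x₂ = (derivative S).eval x₂ * T.eval x₂ := by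
    simp [hW, hS₂]
  have hF1 : 0 ≤ F x₁ := by
    simp only [hF, hW1]
    exact mul_nonneg (Real.exp_pos _).le (mul_nonneg dS1 tT1)
  have hF2 : F x₂ ≤ 0 := by
    simp only [hF, hW2]
    exact mul_nonpos_of_nonneg_of_nonpos (Real.exp_pos _).le
      (mul_nonpos_of_nonpos_of_nonneg dS2 tT2)
  have := hmono (Set.left_mem_Icc.2 hx.le) (Set.right_mem_Icc.2 hx.le) hx
  linarith

/-- Sturm comparison: between consecutive zeros of `S` (in a region avoiding the
singular points and where `(x−ν)/A(x) < 0`), the solution `T` of the equation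
with larger `μ̃ > μ` must have a zero. -/
theorem sturm_comparison_zero_of_T
    (α₁ α₂ α₃ ρ₁ ρ₂ ρ₃ : ℝ)
    (h12 : α₁ < α₂) (h23 : α₂ < α₃)
    (hρ₁ : 0 < ρ₁) (hρ₂ : 0 < ρ₂) (hρ₃ : 0 < ρ₃)
    (A B : ℝ[X])
    (hA : A = (X - C α₁) * (X - C α₂) * (X - C α₃))
    (hB : B = C (2 * ρ₁) * ((X - C α₂) * (X - C α₃))
            + C (2 * ρ₂) * ((X - C α₁) * (X - C α₃))
            + C (2 * ρ₃) * ((X - C α₁) * (X - C α₂)))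
    (ν μ μ' : ℝ) (hμμ' : μ < μ')
    (S T : ℝ[X]) (hSne : S ≠ 0)
    (hS : A * derivative (derivative S) + B * derivative S
            = C μ * (X - C ν) * S)
    (hT : A * derivative (derivative T) + B * derivative T
            = C μ' * (X - C ν) * T)
    (x₁ x₂ : ℝ) (hx : x₁ < x₂)
    (hS₁ : S.eval x₁ = 0) (hS₂ : S.eval x₂ = 0)
    (hSnz : ∀ x ∈ Set.Ioo x₁ x₂, S.eval x ≠ 0)
    (hα₁ : α₁ ∉ Set.Icc x₁ x₂) (hα₂ : α₂ ∉ Set.Icc x₁ x₂)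
    (hα₃ : α₃ ∉ Set.Icc x₁ x₂)
    (hQ : ∀ x ∈ Set.Ioo x₁ x₂, (x - ν) / A.eval x < 0) :
    ∃ x ∈ Set.Ioo x₁ x₂, T.eval x = 0 := by
  by_contra hcon
  push_neg at hcon
  have hAne : ∀ x ∈ Set.Icc x₁ x₂, A.eval x ≠ 0 := by
    intro x hxm
    rw [hA]
    simp only [eval_mul, eval_sub, eval_X, eval_C]
    have h1 : x ≠ α₁ := fun h => hα₁ (h ▸ hxm)
    have h2 : x ≠ α₂ := fun h => hα₂ (h ▸ hxm)
    have h3 : x ≠ α₃ := fun h => hα₃ (h ▸ hxm)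
    exact mul_ne_zero (mul_ne_zero (sub_ne_zero.2 h1) (sub_ne_zero.2 h2)) (sub_ne_zero.2 h3)
  have hSneg_eq : A * derivative (derivative (-S)) + B * derivative (-S)
      = C μ * (X - C ν) * (-S) := by
    simp only [derivative_neg, mul_neg]
    linear_combination -hS
  have hTneg_eq : A * derivative (derivative (-T)) + B * derivative (-T)
      = C μ' * (X - C ν) * (-T) := by
    simp only [derivative_neg, mul_neg]
    linear_combination -hT
  obtain hSpos | hSneg := sign_const_aux (fun x => S.eval x) x₁ x₂ S.continuous hSnz
  all_goals obtain hTpos | hTneg := sign_const_aux (fun x => T.eval x) x₁ x₂ T.continuous hcon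
  · exact sturm_core A B ν μ μ' hμμ' S T hS hT x₁ x₂ hx hS₁ hS₂ hAne hQ hSpos hTpos
  · refine sturm_core A B ν μ μ' hμμ' S (-T) hS hTneg_eq x₁ x₂ hx hS₁ hS₂ hAne hQ hSpos ?_
    intro x hxm; simp only [eval_neg]; linarith [hTneg x hxm]
  · refine sturm_core A B ν μ μ' hμμ' (-S) T hSneg_eq hT x₁ x₂ hx (by simp [hS₁])
      (by simp [hS₂]) hAne hQ ?_ hTpos
    intro x hxm; simp only [eval_neg]; linarith [hSneg x hxm]
  · refine sturm_core A B ν μ μ' hμμ' (-S) (-T) hSneg_eq hTneg_eq x₁ x₂ hx (by simp [hS₁])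
      (by simp [hS₂]) hAne hQ ?_ ?_
    · intro x hxm; simp only [eval_neg]; linarith [hSneg x hxm]
    · intro x hxm; simp only [eval_neg]; linarith [hTneg x hxm]
end

section
/- Let n ≥ 2 and let p_n, p_{n−1}, p_{n−2} be monic polynomials with complex coefficients of degrees n, n−1, n−2 respectively, with root multisets R_n, R_{n−1}, R_{n−2} (roots counted with multiplicity over ℂ). If there exist constants a_n, b_n ∈ ℂ such that p_n(x) = (x − a_n) p_{n−1}(x) − b_n p_{n−2}(x), then a_n = Σ_{z ∈ R_n} z − Σ_{z ∈ R_{n−1}} z and b_n = −(1/2) a_n² + (1/2) ( Σ_{z ∈ R_n} z² − Σ_{z ∈ R_{n−1}} z² ). -/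
open Polynomial


lemma esymm_two_cons (a : ℂ) (s : Multiset ℂ) :
    (a ::ₘ s).esymm 2 = s.esymm 2 + a * s.sum := by
  rw [Multiset.esymm, show (2:ℕ) = 1 + 1 from rfl, Multiset.powersetCard_cons,
    Multiset.map_add, Multiset.sum_add]
  congr 1
  rw [Multiset.powersetCard_one, Multiset.map_map, Multiset.map_map]
  simp only [Function.comp, Multiset.prod_cons, Multiset.prod_singleton]
  simpa using Multiset.sum_map_mul_left (s := s) (a := a) (f := fun x => x)

lemma sum_sq_eq (s : Multiset ℂ) :
    (s.map (fun z => z ^ 2)).sum = s.sum ^ 2 - 2 * s.esymm 2 := by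
  induction s using Multiset.induction_on with
  | empty => simp [Multiset.esymm, Multiset.powersetCard_zero_right 1]
  | cons a s ih =>
    rw [Multiset.map_cons, Multiset.sum_cons, Multiset.sum_cons, esymm_two_cons, ih]
    ring

lemma roots_sum_eq (P : ℂ[X]) (hP : P.Monic) (m : ℕ) (hd : P.natDegree = m + 1) :
    P.roots.sum = -P.coeff m := by
  have hs := (IsAlgClosed.splits P).nextCoeff_eq_neg_sum_roots_of_monic hP
  rw [nextCoeff_of_natDegree_pos (by omega), hd] at hs
  simp only [Nat.add_sub_cancel] at hs
  linear_combination hs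

lemma roots_esymm_two (P : ℂ[X]) (hP : P.Monic) (m : ℕ) (hd : P.natDegree = m + 2) :
    P.roots.esymm 2 = P.coeff m := by
  have hc : Multiset.card P.roots = P.natDegree :=
    splits_iff_card_roots.mp (IsAlgClosed.splits P)
  have h := Polynomial.coeff_eq_esymm_roots_of_card hc (k := m) (by omega)
  rw [h, hd, hP.leadingCoeff, show m + 2 - m = 2 by omega]
  norm_num


/-- The three-term recurrence coefficients of monic polynomials are determined by
the power sums of their roots: `a_n = p₁(R_n) − p₁(R_{n−1})` and
`b_n = −a_n²/2 + (p₂(R_n) − p₂(R_{n−1}))/2`. -/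
theorem recurrence_coefficients_from_root_power_sums
    (n : ℕ) (hn : 2 ≤ n)
    (p q r : ℂ[X])
    (hp : p.Monic) (hdp : p.natDegree = n)
    (hq : q.Monic) (hdq : q.natDegree = n - 1)
    (hr : r.Monic) (hdr : r.natDegree = n - 2)
    (a b : ℂ)
    (hrec : p = (X - C a) * q - C b * r) :
    a = p.roots.sum - q.roots.sum ∧
      b = -(1 / 2) * a ^ 2
          + 1 / 2 * ((p.roots.map (fun z => z ^ 2)).sum
              - (q.roots.map (fun z => z ^ 2)).sum) := by
  obtain ⟨m, rfl⟩ : ∃ m, n = m + 2 := ⟨n - 2, by omega⟩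
  rw [Nat.add_sub_cancel] at hdr
  have hdq' : q.natDegree = m + 1 := by omega
  -- coefficient facts
  have hq1 : q.coeff (m + 1) = 1 := by
    have := hq.leadingCoeff; rwa [leadingCoeff, hdq'] at this
  have hr1 : r.coeff (m + 1) = 0 := coeff_eq_zero_of_natDegree_lt (by omega)
  have hr0 : r.coeff m = 1 := by
    have := hr.leadingCoeff; rwa [leadingCoeff, hdr] at this
  -- extract coefficient equations from the recurrence
  have hXq : (X - C a) * q = X * q - C a * q := by ring
  have e1 : p.coeff (m + 1) = q.coeff m - a * q.coeff (m + 1) - b * r.coeff (m + 1) := by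
    conv_lhs => rw [hrec]
    rw [coeff_sub, hXq, coeff_sub, coeff_X_mul, coeff_C_mul, coeff_C_mul]
  have e2 : p.coeff m = (X * q).coeff m - a * q.coeff m - b * r.coeff m := by
    conv_lhs => rw [hrec]
    rw [coeff_sub, hXq, coeff_sub, coeff_C_mul, coeff_C_mul]
  rw [hq1, mul_one, hr1, mul_zero, sub_zero] at e1
  rw [hr0, mul_one] at e2
  -- power sums via coefficients
  have hps : p.roots.sum = -p.coeff (m + 1) := roots_sum_eq p hp (m + 1) hdp
  have hqs : q.roots.sum = -q.coeff m := roots_sum_eq q hq m hdq'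
  have hpe : p.roots.esymm 2 = p.coeff m := roots_esymm_two p hp m hdp
  have hqe : q.roots.esymm 2 = (X * q).coeff m := by
    rcases Nat.eq_zero_or_pos m with rfl | hm
    · -- q has degree 1, so esymm 2 of its single root is 0
      have hc : Multiset.card q.roots = 1 := by
        rw [splits_iff_card_roots.mp (IsAlgClosed.splits q), hdq']
      obtain ⟨z, hz⟩ := Multiset.card_eq_one.mp hc
      rw [hz, coeff_X_mul_zero]
      show ((Multiset.powersetCard 2 {z}).map Multiset.prod).sum = 0
      simp [Multiset.powersetCard_cons]
    · obtain ⟨k, rfl⟩ : ∃ k, m = k + 1 := ⟨m - 1, by omega⟩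
      rw [show k + 1 = k + 0 + 1 by ring, coeff_X_mul]
      exact roots_esymm_two q hq k (by omega)
  have ha : a = p.roots.sum - q.roots.sum := by
    rw [hps, hqs]; linear_combination e1
  refine ⟨ha, ?_⟩
  rw [sum_sq_eq, sum_sq_eq, hps, hqs, hpe, hqe, ha, hps, hqs]
  linear_combination e2 - q.coeff m * e1
end
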